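/- arXiv:2309.01800 — 9 statements merged into one kernel-verified Lean document; each statement's English description precedes it below -/
import Mathlib

section
/- Let q ≥ 3, 1 ≤ ℓ < q, L ≥ 2 and m ≥ 1 be integers, let M = qm and n = (qm)!/(m!)^q, and let C ⊆ [q]^n be the simplex code whose M codewords are the rows of the M×n matrix whose columns are exactly all distinct vectors in [q]^M containing each symbol of [q] exactly m times. Then for every L-tuple (c_1,...,c_L) of pairwise distinct codewords of C, the average ℓ-radius satisfies radbar_ℓ(c_1,...,c_L) = 1 − ∑_{a∈A_{q,L}} (maxℓ{a}/L) · multinom(L; a_1,...,a_q) · multinom(qm−L; m−a_1,...,m−a_q) / multinom(qm; m,...,m), where A_{q,L} = {(a_1,...,a_q) ∈ ℤ_{≥0}^q : a_1+⋯+a_q = L}, maxℓ{a} = max_{A ⊆ [q], |A|=ℓ} ∑_{i∈A} a_i, multinom denotes the multinomial coefficient (taken to be 0 if any lower entry is negative). Consequently, since the ℓ-radius of any L distinct codewords is at least their average ℓ-radius, C is (p,ℓ,L)-list-recoverable for every p strictly less than this common value. -/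
open Finset
open scoped Classical

/-- `plurL ℓ (x₁,…,x_L)`: number of occurrences of the `ℓ` most popular symbols. -/
def plurL (ℓ : ℕ) {q L : ℕ} (x : Fin L → Fin q) : ℕ :=
  (Finset.powersetCard ℓ (Finset.univ : Finset (Fin q))).sup
    fun A => (Finset.univ.filter fun i => x i ∈ A).card

/-- `maxl q ℓ a`: the sum of the `ℓ` largest entries of `a`, i.e.
`max_{A ⊆ [q], |A|=ℓ} ∑_{i∈A} a i`. -/
def maxl (q ℓ : ℕ) (a : Fin q → ℕ) : ℕ :=
  (Finset.powersetCard ℓ (Finset.univ : Finset (Fin q))).sup fun A => ∑ i ∈ A, a i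

/-- The list-recovery distance between `x ∈ [q]^n` and a tuple of `ℓ`-subsets. -/
def dLR {q ℓ n : ℕ} (x : Fin n → Fin q) (Y : Fin n → {A : Finset (Fin q) // A.card = ℓ}) : ℕ :=
  (Finset.univ.filter fun j => x j ∉ (Y j).1).card

/-! A column of the simplex code is a balanced word `v ∈ [q]^(qm)`, and its contribution to the
average radius of the rows `T = {r₁, …, r_L}` depends only on the type `a` of `v` restricted
to `T`: the `ℓ`-plurality of the column is the sum of the `ℓ` largest entries of `a`. Splitting
`v` into its restrictions to `T` and to the complement of `T`, the balanced words of type `a`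
on `T` number `multinom(L; a) · multinom(qm - L; m - a)`, which gives the formula.

List-recoverability follows from `radbar ≤ rad`: in every column `j`,
`L - plur_ℓ ≤ #{i | c_i(j) ∉ Y_j}`, so if `L` distinct codewords were all within distance `pn`
of `Y`, summing over the columns would give `R = radbar ≤ p`. -/

variable {α β γ ι : Type*}

def symbolCount [Fintype α] [DecidableEq ι] (x : α → ι) (s : ι) : ℕ :=
  #{i | x i = s}

section symbolCount

variable [DecidableEq ι]

theorem sum_symbolCount_mem [Fintype α] (x : α → ι) (A : Finset ι) :
    ∑ s ∈ A, symbolCount x s = #{i | x i ∈ A} :=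
  sum_card_fiberwise_eq_card_filter _ _ _

theorem sum_symbolCount [Fintype α] [Fintype ι] (x : α → ι) :
    ∑ s, symbolCount x s = Fintype.card α := by
  rw [sum_symbolCount_mem, filter_true_of_mem fun _ _ => mem_univ _, card_univ]

theorem symbolCount_comp_equiv [Fintype α] [Fintype β] (e : β ≃ α) (x : α → ι) :
    symbolCount (x ∘ e) = symbolCount x := by
  ext s
  exact card_equiv e (by simp)

theorem symbolCount_sumElim [Fintype α] [Fintype β] (x : α → ι) (y : β → ι) :
    symbolCount (Sum.elim x y) = symbolCount x + symbolCount y := by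
  ext s
  simp only [symbolCount, card_filter, Fintype.sum_sum_type, Sum.elim_inl, Sum.elim_inr,
    Pi.add_apply]
  rfl

/-- Compare the coefficients of `∏ i, X i ^ b i` in
`(∑ i, X i) ^ |α| = ∑ x : α → ι, ∏ a, X (x a)`. -/
theorem card_filter_symbolCount_eq [Fintype α] [DecidableEq α] [Fintype ι] (b : ι → ℕ)
    (hb : ∑ i, b i = Fintype.card α) :
    #{x : α → ι | symbolCount x = b} = Nat.multinomial univ b := by
  set d : ι →₀ ℕ := Finsupp.equivFunOnFinite.symm b
  have key := MvPolynomial.coeff_sum_X_pow_of_fintype (R := ℕ) d (Fintype.card α)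
  have hmono : ∀ x : α → ι, ∏ a, (MvPolynomial.X (x a) : MvPolynomial ι ℕ) =
      ∏ i, MvPolynomial.X i ^ symbolCount x i := by
    intro x
    rw [← Fintype.prod_fiberwise' x]
    simp [symbolCount, Fintype.card_subtype]
  rw [← card_univ, ← prod_const, prod_univ_sum] at key
  simp only [hmono, MvPolynomial.coeff_sum, MvPolynomial.coeff_prod_X_pow] at key
  have hd : ∀ x : α → ι, d = Finsupp.indicator univ (fun i _ => symbolCount x i) ↔
      symbolCount x = b := by
    intro x
    simp [Finsupp.ext_iff, funext_iff, d, eq_comm]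
  simp only [hd, Fintype.piFinset_univ, sum_boole, Nat.cast_id] at key
  rw [key, Finsupp.sum_fintype _ _ (fun _ => rfl), card_univ, if_pos (by simpa [d] using hb),
    Finsupp.multinomial_eq_of_support_subset (subset_univ _)]
  rfl

end symbolCount

noncomputable def sumComplRangeEquiv (rs : γ → α) (hrs : Function.Injective rs) :
    γ ⊕ {x // x ∉ Set.range rs} ≃ α :=
  (Equiv.sumCongr (Equiv.ofInjective rs hrs) (Equiv.refl _)).trans (Equiv.sumCompl _)

theorem comp_sumComplRangeEquiv (rs : γ → α) (hrs : Function.Injective rs) (v : α → ι) :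
    v ∘ sumComplRangeEquiv rs hrs =
      Sum.elim (v ∘ rs) (fun x : {x // x ∉ Set.range rs} => v x) := by
  ext (i | x) <;> rfl

section restriction

variable [DecidableEq ι] [Fintype α] [DecidableEq α] [Fintype γ] {rs : γ → α}

theorem symbolCount_eq_comp_add_compl (hrs : Function.Injective rs) (v : α → ι) :
    symbolCount v =
      symbolCount (v ∘ rs) + symbolCount (fun x : {x // x ∉ Set.range rs} => v x) := by
  rw [← symbolCount_comp_equiv (sumComplRangeEquiv rs hrs), comp_sumComplRangeEquiv,
    symbolCount_sumElim]

theorem symbolCount_comp_le (hrs : Function.Injective rs) (v : α → ι) :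
    symbolCount (v ∘ rs) ≤ symbolCount v := by
  rw [symbolCount_eq_comp_add_compl hrs v]
  exact le_self_add

theorem card_filter_symbolCount_and_comp_eq [Fintype ι] [DecidableEq γ]
    (hrs : Function.Injective rs) {a c : ι → ℕ}
    (ha : ∑ i, a i = Fintype.card γ) (hc : ∑ i, c i = Fintype.card α) (hac : a ≤ c) :
    #{v : α → ι | symbolCount v = c ∧ symbolCount (v ∘ rs) = a} =
      Nat.multinomial univ a * Nat.multinomial univ (c - a) := by
  let Φ := ((sumComplRangeEquiv rs hrs).arrowCongr (Equiv.refl ι)).symm.trans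
    (Equiv.sumArrowEquivProdArrow _ _ ι)
  have hΦ : #{v : α → ι | symbolCount v = c ∧ symbolCount (v ∘ rs) = a} =
      #((univ : Finset ((γ → ι) × ({x // x ∉ Set.range rs} → ι))).filter
        fun p => symbolCount p.1 = a ∧ symbolCount p.2 = c - a) := by
    refine card_equiv Φ fun v => ?_
    simp only [mem_filter, mem_univ, true_and, symbolCount_eq_comp_add_compl hrs v]
    change _ ↔ symbolCount (v ∘ rs) = a ∧
      symbolCount (fun x : {x // x ∉ Set.range rs} => v x) = c - a
    constructor
    · rintro ⟨rfl, hva⟩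
      exact ⟨hva, by rw [hva, add_tsub_cancel_left]⟩
    · rintro ⟨hva, hvb⟩
      rw [hva, hvb, add_tsub_cancel_of_le hac]
      exact ⟨rfl, rfl⟩
  have hcompl : ∑ i, (c - a) i = Fintype.card {x // x ∉ Set.range rs} := by
    rw [Fintype.card_subtype_compl, Set.card_range_of_injective hrs, ← hc, ← ha,
      ← sum_tsub_distrib _ fun i _ => hac i]
    rfl
  rw [hΦ, ← univ_product_univ, filter_product (p := fun f => symbolCount f = a)
    (q := fun g => symbolCount g = c - a), card_product,
    card_filter_symbolCount_eq a ha, card_filter_symbolCount_eq (c - a) hcompl]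

end restriction

section radius

variable {q ℓ L n : ℕ}

noncomputable def avgRadius (ℓ : ℕ) (c : Fin L → Fin n → Fin q) : ℝ :=
  (1 / n) * ∑ j, (1 - (plurL ℓ (fun i => c i j) : ℝ) / L)

def IsListRecoverable (C : Finset (Fin n → Fin q)) (p : ℝ) (ℓ L : ℕ) : Prop :=
  ∀ Y : Fin n → {A : Finset (Fin q) // A.card = ℓ},
    #{c ∈ C | (dLR c Y : ℝ) ≤ p * n} ≤ L - 1

theorem plurL_eq_maxl_symbolCount (x : Fin L → Fin q) :
    plurL ℓ x = maxl q ℓ (symbolCount x) :=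
  sup_congr rfl fun A _ => (sum_symbolCount_mem x A).symm

theorem card_filter_mem_le_plurL (x : Fin L → Fin q) {A : Finset (Fin q)} (hA : #A = ℓ) :
    #{i | x i ∈ A} ≤ plurL ℓ x :=
  le_sup (f := fun A => #{i | x i ∈ A}) (mem_powersetCard.2 ⟨subset_univ _, hA⟩)

theorem le_plurL_add_card_filter_not_mem (x : Fin L → Fin q) {A : Finset (Fin q)}
    (hA : #A = ℓ) :
    L ≤ plurL ℓ x + #{i | x i ∉ A} := by
  have := card_filter_mem_le_plurL x hA
  have := card_filter_add_card_filter_not (s := univ) (fun i => x i ∈ A)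
  rw [card_univ, Fintype.card_fin] at this
  omega

theorem mul_le_sum_plurL_add_sum_dLR (c : Fin L → Fin n → Fin q)
    (Y : Fin n → {A : Finset (Fin q) // A.card = ℓ}) :
    n * L ≤ ∑ j, plurL ℓ (fun i => c i j) + ∑ i, dLR (c i) Y := by
  have hswap : ∑ i, dLR (c i) Y = ∑ j, #{i | c i j ∉ (Y j).1} := by
    simp only [dLR, card_filter]
    exact sum_comm
  calc n * L = ∑ _j : Fin n, L := by simp
    _ ≤ ∑ j, (plurL ℓ (fun i => c i j) + #{i | c i j ∉ (Y j).1}) :=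
      sum_le_sum fun j _ => le_plurL_add_card_filter_not_mem _ (Y j).2
    _ = _ := by rw [sum_add_distrib, hswap]

theorem avgRadius_le_of_forall_dLR_le (hn : 0 < n) (hL : 0 < L) {c : Fin L → Fin n → Fin q}
    {Y : Fin n → {A : Finset (Fin q) // A.card = ℓ}} {p : ℝ}
    (hc : ∀ i, (dLR (c i) Y : ℝ) ≤ p * n) : avgRadius ℓ c ≤ p := by
  have hcount :
      (n * L : ℝ) ≤ ∑ j, (plurL ℓ (fun i => c i j) : ℝ) + ∑ i, (dLR (c i) Y : ℝ) := by
    exact_mod_cast mul_le_sum_plurL_add_sum_dLR c Y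
  have hdist : ∑ i, (dLR (c i) Y : ℝ) ≤ L * (p * n) := by
    simpa using sum_le_sum fun i (_ : i ∈ univ) => hc i
  have hn' : (0 : ℝ) < n := by exact_mod_cast hn
  have hL' : (0 : ℝ) < L := by exact_mod_cast hL
  rw [avgRadius, sum_sub_distrib, ← sum_div, sum_const, card_univ, Fintype.card_fin, nsmul_eq_mul,
    mul_one, div_mul_eq_mul_div, one_mul, div_le_iff₀ hn', sub_le_comm,
    le_div_iff₀ hL']
  linarith

theorem IsListRecoverable.of_lt_avgRadius (hn : 0 < n) (hL : 0 < L) {C : Finset (Fin n → Fin q)}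
    {R p : ℝ}
    (hC : ∀ c : Fin L → Fin n → Fin q, Function.Injective c → (∀ i, c i ∈ C) →
      R ≤ avgRadius ℓ c) (hp : p < R) : IsListRecoverable C p ℓ L := by
  intro Y
  by_contra! hcard
  set close := {c ∈ C | (dLR c Y : ℝ) ≤ p * n}
  let c : Fin L → Fin n → Fin q := fun i => (close.equivFin.symm (Fin.castLE (by omega) i)).1
  have hc : Function.Injective c := fun i j hij =>
    Fin.castLE_injective _ (close.equivFin.symm.injective (Subtype.ext hij))
  have hmem : ∀ i, c i ∈ close := fun i => (close.equivFin.symm _).2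
  have := avgRadius_le_of_forall_dLR_le hn hL fun i => (mem_filter.1 (hmem i)).2
  linarith [hC c hc fun i => (mem_filter.1 (hmem i)).1]

end radius

section simplex

variable {q L m : ℕ} [Fintype α] [DecidableEq α] {rs : Fin L → α}

theorem card_filter_balanced_and_comp_eq (hα : Fintype.card α = q * m)
    (hrs : Function.Injective rs) {a : Fin q → ℕ} (ha : a ∈ Nat.antidiagonalTuple q L) :
    #{v : α → Fin q | (∀ s, symbolCount v s = m) ∧ symbolCount (v ∘ rs) = a} =
      Nat.multinomial univ a *
        if ∀ i, a i ≤ m then Nat.multinomial univ (fun i => m - a i) else 0 := by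
  rw [Nat.mem_antidiagonalTuple] at ha
  simp only [← funext_iff (g := fun _ => m)]
  split_ifs with ham
  · refine card_filter_symbolCount_and_comp_eq hrs (by simpa using ha) ?_ ham
    simp [hα]
  · rw [mul_zero, card_eq_zero, filter_eq_empty_iff]
    rintro v - ⟨hv, rfl⟩
    exact ham fun i => (symbolCount_comp_le hrs v i).trans_eq (congrFun hv i)

theorem sum_balanced_eq_sum_antidiagonalTuple (hα : Fintype.card α = q * m)
    (hrs : Function.Injective rs) (g : (Fin q → ℕ) → ℝ) :
    ∑ v : {v : α → Fin q // ∀ s, symbolCount v s = m}, g (symbolCount (v.1 ∘ rs)) =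
      ∑ a ∈ Nat.antidiagonalTuple q L, ((Nat.multinomial univ a *
        if ∀ i, a i ≤ m then Nat.multinomial univ (fun i => m - a i) else 0 : ℕ) : ℝ) *
          g a := by
  rw [← sum_subtype {v | ∀ s, symbolCount v s = m} (by simp)
      (fun v => g (symbolCount (v ∘ rs))),
    ← sum_fiberwise_of_maps_to (g := fun v => symbolCount (v ∘ rs))
    (t := Nat.antidiagonalTuple q L) fun v _ =>
      Nat.mem_antidiagonalTuple.2 ((sum_symbolCount _).trans (Fintype.card_fin L))]
  refine sum_congr rfl fun a ha => ?_
  rw [sum_congr rfl fun v hv => congrArg g (mem_filter.1 hv).2, sum_const, nsmul_eq_mul,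
    filter_filter, card_filter_balanced_and_comp_eq hα hrs ha]

theorem card_balanced (hα : Fintype.card α = q * m) :
    Fintype.card {v : α → Fin q // ∀ s, symbolCount v s = m} =
      Nat.multinomial univ (fun _ : Fin q => m) := by
  rw [Fintype.card_subtype]
  simp only [← funext_iff (g := fun _ => m)]
  exact card_filter_symbolCount_eq _ (by simp [hα])

theorem avgRadius_simplex {n : ℕ} (e : Fin n ≃ {v : α → Fin q // ∀ s, symbolCount v s = m})
    (hα : Fintype.card α = q * m) (hrs : Function.Injective rs) (ℓ : ℕ) :
    avgRadius ℓ (fun i j => (e j).1 (rs i)) = 1 - ∑ a ∈ Nat.antidiagonalTuple q L,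
      (maxl q ℓ a : ℝ) / L * Nat.multinomial univ a *
        (if ∀ i, a i ≤ m then (Nat.multinomial univ (fun i => m - a i) : ℝ) else 0) /
        Nat.multinomial univ (fun _ : Fin q => m) := by
  have hsum (g : (Fin q → ℕ) → ℝ) :=
    (e.sum_comp fun v => g (symbolCount (v.1 ∘ rs))).trans
      (sum_balanced_eq_sum_antidiagonalTuple hα hrs g)
  have htotal := hsum fun _ => 1
  simp only [sum_const, card_univ, Fintype.card_fin, nsmul_eq_mul, mul_one] at htotal
  have hn : (n : ℝ) = Nat.multinomial univ (fun _ : Fin q => m) := by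
    rw [← card_balanced hα, ← Fintype.card_congr e, Fintype.card_fin]
  have hn0 : (n : ℝ) ≠ 0 := hn ▸ Nat.cast_ne_zero.2 (Nat.multinomial_pos _ _).ne'
  rw [avgRadius, ← hn, eq_sub_iff_add_eq]
  simp only [plurL_eq_maxl_symbolCount]
  refine (congrArg₂ _ (congrArg _ (hsum fun a => 1 - (maxl q ℓ a : ℝ) / L)) rfl).trans ?_
  rw [mul_sum, ← sum_add_distrib]
  calc _ = ∑ a ∈ Nat.antidiagonalTuple q L, ((Nat.multinomial univ a *
          if ∀ i, a i ≤ m then Nat.multinomial univ (fun i => m - a i) else 0 : ℕ) : ℝ) /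
            n := by
        refine sum_congr rfl fun a _ => ?_
        push_cast
        ring
    _ = 1 := by rw [← sum_div, ← htotal, div_self hn0]

end simplex

theorem simplex_code_average_radius_and_list_recoverability_general
    (q ℓ L m : ℕ) (hL : 2 ≤ L)
    (n : ℕ)
    -- the columns of the codebook are exactly all balanced vectors in `[q]^(qm)`
    (e : Fin n ≃ {v : Fin (q * m) → Fin q //
        ∀ s : Fin q, (Finset.univ.filter fun i => v i = s).card = m})
    -- `cw r` is the codeword given by row `r` of the codebook
    (cw : Fin (q * m) → Fin n → Fin q) (hcw : ∀ r j, cw r j = (e j).1 r)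
    (C : Finset (Fin n → Fin q)) (hC : C = Finset.univ.image cw)
    (R : ℝ)
    (hR : R = 1 - ∑ a ∈ Finset.Nat.antidiagonalTuple q L,
        ((maxl q ℓ a : ℝ) / (L : ℝ)) * (Nat.multinomial Finset.univ a : ℝ) *
          (if ∀ i, a i ≤ m then
              (Nat.multinomial Finset.univ (fun i => m - a i) : ℝ) else 0) /
          (Nat.multinomial (Finset.univ : Finset (Fin q)) (fun _ : Fin q => m) : ℝ)) :
    -- (i) every `L`-tuple of pairwise distinct codewords has average `ℓ`-radius `R`
    (∀ rs : Fin L → Fin (q * m), Function.Injective (fun i => cw (rs i)) →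
      (1 / (n : ℝ)) * ∑ j, (1 - (plurL ℓ (fun i => cw (rs i) j) : ℝ) / (L : ℝ)) = R) ∧
    -- (ii) consequently `C` is `(p,ℓ,L)`-list-recoverable for every `p < R`
    (∀ p : ℝ, p < R → ∀ Y : Fin n → {A : Finset (Fin q) // A.card = ℓ},
      (C.filter fun c => (dLR c Y : ℝ) ≤ p * n).card ≤ L - 1) := by
  have hα : Fintype.card (Fin (q * m)) = q * m := Fintype.card_fin _
  have hn : 0 < n := by
    have hcard : n = Nat.multinomial univ (fun _ : Fin q => m) := by
      simpa using (Fintype.card_congr e).trans (card_balanced hα)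
    exact hcard ▸ Nat.multinomial_pos _ _
  have radius (rs : Fin L → Fin (q * m)) (hinj : Function.Injective fun i => cw (rs i)) :
      avgRadius ℓ (fun i => cw (rs i)) = R := by
    rw [show cw = fun r j => (e j).1 r from funext₂ hcw, hR]
    exact avgRadius_simplex e hα (fun _ _ h => hinj (congrArg cw h)) ℓ
  refine ⟨radius, fun p hp => IsListRecoverable.of_lt_avgRadius hn (by omega) ?_ hp⟩
  intro c hc hcC
  choose rs hrs using fun i => mem_image.1 (hC ▸ hcC i)
  obtain rfl : c = fun i => cw (rs i) := funext fun i => (hrs i).2.symm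
  exact (radius rs hc).ge

theorem simplex_code_average_radius_and_list_recoverability
    (q ℓ L m : ℕ) (hq : 3 ≤ q) (hl1 : 1 ≤ ℓ) (hlq : ℓ < q) (hL : 2 ≤ L) (hm : 1 ≤ m)
    (n : ℕ) (hn : n = Nat.multinomial (Finset.univ : Finset (Fin q)) (fun _ => m))
    -- the columns of the codebook are exactly all balanced vectors in `[q]^(qm)`
    (e : Fin n ≃ {v : Fin (q * m) → Fin q //
        ∀ s : Fin q, (Finset.univ.filter fun i => v i = s).card = m})
    -- `cw r` is the codeword given by row `r` of the codebook
    (cw : Fin (q * m) → Fin n → Fin q) (hcw : ∀ r j, cw r j = (e j).1 r)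
    (C : Finset (Fin n → Fin q)) (hC : C = Finset.univ.image cw)
    (R : ℝ)
    (hR : R = 1 - ∑ a ∈ Finset.Nat.antidiagonalTuple q L,
        ((maxl q ℓ a : ℝ) / (L : ℝ)) * (Nat.multinomial Finset.univ a : ℝ) *
          (if ∀ i, a i ≤ m then
              (Nat.multinomial Finset.univ (fun i => m - a i) : ℝ) else 0) /
          (Nat.multinomial (Finset.univ : Finset (Fin q)) (fun _ : Fin q => m) : ℝ)) :
    -- (i) every `L`-tuple of pairwise distinct codewords has average `ℓ`-radius `R`
    (∀ rs : Fin L → Fin (q * m), Function.Injective (fun i => cw (rs i)) →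
      (1 / (n : ℝ)) * ∑ j, (1 - (plurL ℓ (fun i => cw (rs i) j) : ℝ) / (L : ℝ)) = R) ∧
    -- (ii) consequently `C` is `(p,ℓ,L)`-list-recoverable for every `p < R`
    (∀ p : ℝ, p < R → ∀ Y : Fin n → {A : Finset (Fin q) // A.card = ℓ},
      (C.filter fun c => (dLR c Y : ℝ) ≤ p * n).card ≤ L - 1) :=
  simplex_code_average_radius_and_list_recoverability_general q ℓ L m hL n e cw hcw C hC R hR
end

section
/- Let c_1,...,c_L ∈ [q]^n and let x_1,...,x_L ∈ (∂Δ)^n be their images under the coordinatewise embedding φ. Then radh(c_1,...,c_L) ≤ rad(x_1,...,x_L) + L/n. -/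
open Finset

/-- A probability distribution on a finite type. -/
def IsDist {α : Type*} [Fintype α] (P : α → ℝ) : Prop :=
  (∀ a, 0 ≤ P a) ∧ ∑ a, P a = 1

lemma dist_le_one {q : ℕ} {p : Fin q → ℝ} (hp : IsDist p) (k : Fin q) : p k ≤ 1 := by
  rw [← hp.2]
  exact Finset.single_le_sum (fun a _ => hp.1 a) (mem_univ k)

lemma two_le_of_pair {q : ℕ} {p : Fin q → ℝ} (hp : IsDist p) {a b : Fin q} (hab : a ≠ b) :
    p a + p b ≤ 1 := by
  rw [← hp.2]
  have : ({a, b} : Finset (Fin q)).sum p ≤ univ.sum p :=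
    Finset.sum_le_sum_of_subset_of_nonneg (subset_univ _) (fun i _ _ => hp.1 i)
  rwa [Finset.sum_pair hab] at this

lemma frac_two_pos {q : ℕ} {p : Fin q → ℝ} (hp : IsDist p) (h : ¬ ∃ k, p k = 1) :
    ∃ a b : Fin q, a ≠ b ∧ 0 < p a ∧ 0 < p b := by
  have ha : ∃ a, 0 < p a := by
    by_contra hc
    push_neg at hc
    have : ∑ a, p a = 0 := Finset.sum_eq_zero fun a _ => le_antisymm (hc a) (hp.1 a)
    rw [hp.2] at this; norm_num at this
  obtain ⟨a, hpa⟩ := ha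
  have hlt : p a < 1 := lt_of_le_of_ne (dist_le_one hp a) (fun hh => h ⟨a, hh⟩)
  have hb : ∃ b ∈ univ.erase a, 0 < p b := by
    by_contra hc
    push_neg at hc
    have hz : ∑ b ∈ univ.erase a, p b = 0 :=
      Finset.sum_eq_zero fun b hb => le_antisymm (hc b hb) (hp.1 b)
    have := Finset.add_sum_erase univ p (mem_univ a)
    rw [hz, add_zero, hp.2] at this
    linarith
  obtain ⟨b, hbmem, hpb⟩ := hb
  exact ⟨b, a, Finset.ne_of_mem_erase hbmem, hpb, hpa⟩

/-- Key rounding lemma. -/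
lemma key_round (L q n : ℕ) (hq : 0 < q) :
    ∀ (N : ℕ) (cs : Fin L → Fin n → Fin q) (y : Fin n → Fin q → ℝ),
      (∑ j, (univ.filter fun k => y j k ≠ 0).card) ≤ N → (∀ j, IsDist (y j)) →
      ∃ r : Fin n → Fin q, ∀ i,
        ∑ j, y j (cs i j) ≤ ((univ.filter fun j => cs i j = r j).card : ℝ) + L := by
  intro N
  induction N using Nat.strong_induction_on with
  | _ N IH =>
  intro cs y hN hy
  by_cases hfrac : (univ.filter fun j => ¬ ∃ k, y j k = 1).card ≤ L
  · -- base case: at most L fractional coordinates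
    refine ⟨fun j => if h : ∃ k, y j k = 1 then h.choose else ⟨0, hq⟩, fun i => ?_⟩
    have hterm : ∀ j, y j (cs i j) ≤
        (if cs i j = (if h : ∃ k, y j k = 1 then h.choose else ⟨0, hq⟩) then (1:ℝ) else 0)
          + (if ∃ k, y j k = 1 then (0:ℝ) else 1) := by
      intro j
      by_cases h : ∃ k, y j k = 1
      · rw [dif_pos h, if_pos h, add_zero]
        by_cases hc : cs i j = h.choose
        · rw [if_pos hc]; exact dist_le_one (hy j) _
        · rw [if_neg hc]
          have h1 := h.choose_spec
          have h2 := two_le_of_pair (hy j) (Ne.symm hc)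
          linarith [(hy j).1 (cs i j)]
      · rw [dif_neg h, if_neg h]
        have h3 := dist_le_one (hy j) (cs i j)
        by_cases hc : cs i j = (⟨0, hq⟩ : Fin q)
        · rw [if_pos hc]; linarith
        · rw [if_neg hc]; linarith
    calc ∑ j, y j (cs i j) ≤ ∑ j, ((if cs i j =
            (if h : ∃ k, y j k = 1 then h.choose else ⟨0, hq⟩) then (1:ℝ) else 0)
          + (if ∃ k, y j k = 1 then (0:ℝ) else 1)) := Finset.sum_le_sum fun j _ => hterm j
      _ = ((univ.filter fun j => cs i j =
            (if h : ∃ k, y j k = 1 then h.choose else ⟨0, hq⟩)).card : ℝ)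
          + ((univ.filter fun j => ¬ ∃ k, y j k = 1).card : ℝ) := by
            rw [Finset.sum_add_distrib, Finset.sum_boole]
            congr 1
            rw [← Finset.sum_boole]
            apply Finset.sum_congr rfl
            intro j _
            by_cases h : ∃ k, y j k = 1 <;> simp [h]
      _ ≤ _ := by
            have : ((univ.filter fun j => ¬ ∃ k, y j k = 1).card : ℝ) ≤ L := by
              exact_mod_cast hfrac
            linarith
  · -- pivot case
    rw [not_le] at hfrac
    obtain ⟨T, hTsub, hTcard⟩ := Finset.exists_subset_card_eq (Nat.succ_le_of_lt hfrac)
    let e := Finset.equivFinOfCardEq hTcard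
    set jm : Fin (L+1) → Fin n := fun t => ((e.symm t : T) : Fin n) with hjm_def
    have hjm_inj : Function.Injective jm := by
      intro a b hab
      have : (e.symm a : T) = e.symm b := Subtype.ext hab
      exact e.symm.injective this
    have hjm_frac : ∀ t, ¬ ∃ k, y (jm t) k = 1 := by
      intro t
      have hmem : (jm t) ∈ (univ.filter fun j => ¬ ∃ k, y j k = 1) := hTsub (e.symm t).2
      exact (Finset.mem_filter.mp hmem).2
    have hpp : ∀ t : Fin (L+1), ∃ a b : Fin q, a ≠ b ∧ 0 < y (jm t) a ∧ 0 < y (jm t) b :=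
      fun t => frac_two_pos (hy _) (hjm_frac t)
    choose sa sb hsab hsa hsb using hpp
    set w : Fin (L+1) → Fin L → ℝ := fun t i =>
      (if cs i (jm t) = sa t then (1:ℝ) else 0) - (if cs i (jm t) = sb t then 1 else 0) with hw
    obtain ⟨g, hgsum, t0, hgt0⟩ : ∃ g : Fin (L+1) → ℝ, ∑ t, g t • w t = 0 ∧ ∃ t, g t ≠ 0 := by
      have h : ¬ LinearIndependent ℝ w := by
        intro h
        have := h.fintype_card_le_finrank
        simp [Module.finrank_fintype_fun_eq_card] at this
      rw [Fintype.linearIndependent_iff] at h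
      push_neg at h
      obtain ⟨g, hg, t, ht⟩ := h
      exact ⟨g, hg, t, ht⟩
    set u : Fin n → Fin q → ℝ := fun a k => ∑ t, if a = jm t then
      g t * ((if k = sa t then (1:ℝ) else 0) - (if k = sb t then 1 else 0)) else 0 with hu
    have hu_at : ∀ t k, u (jm t) k =
        g t * ((if k = sa t then (1:ℝ) else 0) - (if k = sb t then 1 else 0)) := by
      intro t k
      simp only [hu]
      rw [Finset.sum_eq_single t]
      · simp
      · intro t' _ hne
        rw [if_neg]
        intro hh
        exact hne (hjm_inj hh.symm)
      · intro h; exact absurd (mem_univ t) h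
    have husum : ∀ a, ∑ k, u a k = 0 := by
      intro a
      simp only [hu]
      rw [Finset.sum_comm]
      apply Finset.sum_eq_zero
      intro t _
      by_cases h : a = jm t
      · simp [h, mul_sub, Finset.sum_sub_distrib, Finset.mul_sum]
      · simp [h]
    have hobj : ∀ i, ∑ a, u a (cs i a) = 0 := by
      intro i
      have h0 : ∑ t, (g t • w t) i = 0 := by
        rw [← Finset.sum_apply, hgsum]; rfl
      have h1 : ∑ a, u a (cs i a) = ∑ t, (g t • w t) i := by
        simp only [hu]
        rw [Finset.sum_comm]
        apply Finset.sum_congr rfl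
        intro t _
        rw [Finset.sum_ite_eq' univ (jm t)
          (fun a => g t * ((if cs i a = sa t then (1:ℝ) else 0) - (if cs i a = sb t then 1 else 0)))]
        simp [hw]
      rw [h1, h0]
    have hsupp : ∀ a k, u a k ≠ 0 → 0 < y a k := by
      intro a k hne
      simp only [hu] at hne
      obtain ⟨t, _, ht⟩ := Finset.exists_ne_zero_of_sum_ne_zero hne
      by_cases h : a = jm t
      · subst h
        by_cases h1 : k = sa t
        · subst h1; exact hsa t
        · by_cases h2 : k = sb t
          · subst h2; exact hsb t
          · simp [h1, h2] at ht
      · simp [h] at ht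
    have hneg : ∃ p : Fin n × Fin q, u p.1 p.2 < 0 := by
      rcases lt_trichotomy (g t0) 0 with h | h | h
      · refine ⟨(jm t0, sa t0), ?_⟩
        rw [hu_at]
        simp [hsab t0]
        linarith
      · exact absurd h hgt0
      · refine ⟨(jm t0, sb t0), ?_⟩
        rw [hu_at]
        simp [(hsab t0).symm, Ne.symm (hsab t0)]
        linarith
    set Neg : Finset (Fin n × Fin q) := univ.filter fun p => u p.1 p.2 < 0 with hNeg
    have hne : Neg.Nonempty := by
      obtain ⟨p, hp⟩ := hneg
      exact ⟨p, by simp [hNeg, hp]⟩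
    set ε : ℝ := Neg.inf' hne fun p => y p.1 p.2 / (-(u p.1 p.2)) with hε
    have hεpos : 0 < ε := by
      rw [hε, Finset.lt_inf'_iff]
      intro p hp
      have hu_neg : u p.1 p.2 < 0 := (Finset.mem_filter.mp hp).2
      exact div_pos (hsupp p.1 p.2 (ne_of_lt hu_neg)) (by linarith)
    have hεle : ∀ a k, u a k < 0 → ε * (-(u a k)) ≤ y a k := by
      intro a k huk
      have hmem : (a, k) ∈ Neg := by simp [hNeg, huk]
      have := Finset.inf'_le (fun p : Fin n × Fin q => y p.1 p.2 / (-(u p.1 p.2))) hmem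
      rw [← hε] at this
      rw [← le_div_iff₀ (by linarith : (0:ℝ) < -(u a k))]
      exact this
    set y' : Fin n → Fin q → ℝ := fun a k => y a k + ε * u a k with hy'def
    have hy'nonneg : ∀ a k, 0 ≤ y' a k := by
      intro a k
      rcases le_or_gt 0 (u a k) with h | h
      · have := (hy a).1 k
        have : 0 ≤ ε * u a k := mul_nonneg (le_of_lt hεpos) h
        simp only [hy'def]
        linarith [(hy a).1 k]
      · have := hεle a k h
        simp only [hy'def]
        linarith
    have hy' : ∀ a, IsDist (y' a) := by
      intro a
      refine ⟨hy'nonneg a, ?_⟩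
      simp only [hy'def]
      rw [Finset.sum_add_distrib, ← Finset.mul_sum, husum a, mul_zero, add_zero]
      exact (hy a).2
    have hobj' : ∀ i, ∑ a, y' a (cs i a) = ∑ a, y a (cs i a) := by
      intro i
      simp only [hy'def]
      rw [Finset.sum_add_distrib, ← Finset.mul_sum, hobj i, mul_zero, add_zero]
    -- support strictly decreases
    obtain ⟨p0, hp0mem, hp0eq⟩ := Finset.exists_mem_eq_inf' hne
      (fun p : Fin n × Fin q => y p.1 p.2 / (-(u p.1 p.2)))
    have hu0 : u p0.1 p0.2 < 0 := (Finset.mem_filter.mp hp0mem).2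
    have hy0pos : 0 < y p0.1 p0.2 := hsupp _ _ (ne_of_lt hu0)
    have hzero : y' p0.1 p0.2 = 0 := by
      simp only [hy'def]
      rw [← hε] at hp0eq
      rw [hp0eq]
      have hc : y p0.1 p0.2 / -u p0.1 p0.2 * u p0.1 p0.2 = - y p0.1 p0.2 := by
        rw [div_neg, neg_mul, mul_comm, ← mul_div_assoc, mul_comm,
          mul_div_assoc, div_self (ne_of_lt hu0), mul_one]
      rw [hc]; ring
    have hsub : ∀ a, (univ.filter fun k => y' a k ≠ 0) ⊆ (univ.filter fun k => y a k ≠ 0) := by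
      intro a k hk
      rw [Finset.mem_filter] at hk ⊢
      refine ⟨mem_univ k, ?_⟩
      intro hzero'
      have hu_z : u a k = 0 := by
        by_contra hc
        exact absurd hzero' (ne_of_gt (hsupp a k hc))
      apply hk.2
      simp [hy'def, hzero', hu_z]
    have hmeas : (∑ j, (univ.filter fun k => y' j k ≠ 0).card) <
        (∑ j, (univ.filter fun k => y j k ≠ 0).card) := by
      apply Finset.sum_lt_sum
      · intro j _
        exact Finset.card_le_card (hsub j)
      · refine ⟨p0.1, mem_univ _, ?_⟩
        apply Finset.card_lt_card
        rw [Finset.ssubset_iff_of_subset (hsub p0.1)]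
        refine ⟨p0.2, ?_, ?_⟩
        · simp [ne_of_gt hy0pos]
        · simp [hzero]
    obtain ⟨r, hr⟩ := IH (∑ j, (univ.filter fun k => y' j k ≠ 0).card)
      (lt_of_lt_of_le hmeas hN) cs y' le_rfl hy'
    refine ⟨r, fun i => ?_⟩
    rw [← hobj' i]
    exact hr i


/-- The embedding `φ : [q] → ∂Δ` sending `x` to the standard basis vector `e_x`. -/
noncomputable def phi (q : ℕ) (x : Fin q) : Fin q → ℝ := fun k => if k = x then 1 else 0

/-- `d(x,y) = (1/2) ∑_j ‖x(j) − y(j)‖₁` for blocks in `ℝ^q`. -/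
noncomputable def dvec {q n : ℕ} (x y : Fin n → Fin q → ℝ) : ℝ :=
  (1 / 2) * ∑ j, ∑ k, |x j k - y j k|

lemma phi_isDist {q : ℕ} (x : Fin q) : IsDist (phi q x) := by
  constructor
  · intro k; unfold phi; split <;> norm_num
  · unfold phi; rw [Finset.sum_ite_eq' univ x (fun _ => (1:ℝ))]; simp

lemma dvec_ge {q n : ℕ} (c : Fin n → Fin q) (y : Fin n → Fin q → ℝ)
    (hy : ∀ j, IsDist (y j)) :
    (n : ℝ) - ∑ j, y j (c j) ≤ dvec (fun j => phi q (c j)) y := by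
  unfold dvec phi
  have hinner : ∀ j, 2 - 2 * y j (c j) ≤ ∑ k, |(if k = c j then (1:ℝ) else 0) - y j k| := by
    intro j
    have h1 : ∀ k ∈ univ, (if k = c j then 1 - 2 * y j k else (0:ℝ)) + y j k ≤
        |(if k = c j then (1:ℝ) else 0) - y j k| := by
      intro k _
      by_cases h : k = c j
      · rw [if_pos h, if_pos h]
        have := le_abs_self ((1:ℝ) - y j k)
        linarith
      · rw [if_neg h, if_neg h, zero_sub, abs_neg, zero_add]
        exact le_abs_self _
    have h2 := Finset.sum_le_sum h1
    rw [Finset.sum_add_distrib, (hy j).2,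
      Finset.sum_ite_eq' univ (c j) (fun k => 1 - 2 * y j k)] at h2
    simp only [mem_univ, if_true] at h2
    linarith
  have hconst : ∑ j : Fin n, ((2:ℝ) - 2 * y j (c j)) = 2 * n - 2 * ∑ j, y j (c j) := by
    rw [Finset.sum_sub_distrib, Finset.sum_const, card_univ, Finset.mul_sum]
    simp [Fintype.card_fin]
    ring
  calc (n : ℝ) - ∑ j, y j (c j) = (1/2) * ∑ j : Fin n, (2 - 2 * y j (c j)) := by
        rw [hconst]; ring
  _ ≤ _ := by
        apply mul_le_mul_of_nonneg_left _ (by norm_num : (0:ℝ) ≤ 1/2)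
        exact Finset.sum_le_sum fun j _ => hinner j


/-- The relaxed Chebyshev radius `rad(x₁,…,x_L) = (1/n) inf_{y∈Δⁿ} max_i d(xᵢ,y)`. -/
noncomputable def radRelax {q n L : ℕ} (xs : Fin L → Fin n → Fin q → ℝ) : ℝ :=
  (1 / (n : ℝ)) *
    sInf {r : ℝ | ∃ y : Fin n → Fin q → ℝ, (∀ j, IsDist (y j)) ∧ r = ⨆ i, dvec (xs i) y}

/-- The Chebyshev radius `radh(c₁,…,c_L) = (1/n) min_{r∈[q]^n} max_i d_H(cᵢ,r)`. -/
noncomputable def radh {q n L : ℕ} (cs : Fin L → Fin n → Fin q) : ℝ :=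
  (1 / (n : ℝ)) * ⨅ y : Fin n → Fin q, ⨆ i : Fin L, (hammingDist (cs i) y : ℝ)

theorem radh_le_radRelax_add (q n L : ℕ) (hq : 2 ≤ q) (hn : 1 ≤ n) (hL : 2 ≤ L)
    (cs : Fin L → Fin n → Fin q) :
    radh cs ≤ radRelax (fun i j => phi q (cs i j)) + (L : ℝ) / n := by
  haveI hFq : Nonempty (Fin q) := ⟨⟨0, by omega⟩⟩
  haveI : Nonempty (Fin n) := ⟨⟨0, by omega⟩⟩
  haveI : Nonempty (Fin L) := ⟨⟨0, by omega⟩⟩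
  set S : Set ℝ := {r : ℝ | ∃ y : Fin n → Fin q → ℝ,
    (∀ j, IsDist (y j)) ∧ r = ⨆ i, dvec ((fun i j => phi q (cs i j)) i) y} with hS
  set A : ℝ := ⨅ y : Fin n → Fin q, ⨆ i : Fin L, (hammingDist (cs i) y : ℝ) with hA
  have hSne : S.Nonempty :=
    ⟨_, ⟨fun j => phi q (cs ⟨0, by omega⟩ j), fun j => phi_isDist _, rfl⟩⟩
  have hcount : ∀ i (r : Fin n → Fin q),
      (hammingDist (cs i) r : ℝ) = n - ((univ.filter fun j => cs i j = r j).card : ℝ) := by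
    intro i r
    have h1 : (univ.filter fun j => cs i j = r j).card
        + (univ.filter fun j => ¬ cs i j = r j).card = n := by
      rw [Finset.card_filter_add_card_filter_not, card_univ, Fintype.card_fin]
    have h2 : hammingDist (cs i) r = (univ.filter fun j => ¬ cs i j = r j).card := rfl
    rw [h2]
    have := congrArg (fun m : ℕ => (m : ℝ)) h1
    push_cast at this
    linarith
  have hstep : ∀ s ∈ S, A ≤ s + L := by
    rintro s ⟨y, hy, rfl⟩
    obtain ⟨r, hr⟩ := key_round L q n (by omega) (∑ j, (univ.filter fun k => y j k ≠ 0).card)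
      cs y le_rfl hy
    have h2 : A ≤ ⨆ i, (hammingDist (cs i) r : ℝ) :=
      ciInf_le (Set.Finite.bddBelow (Set.finite_range _)) r
    refine h2.trans (ciSup_le fun i => ?_)
    have h3 := hr i
    have h4 := dvec_ge (cs i) y hy
    have h5 : dvec (fun j => phi q (cs i j)) y ≤
        ⨆ i, dvec ((fun i j => phi q (cs i j)) i) y :=
      le_ciSup (f := fun i => dvec ((fun i j => phi q (cs i j)) i) y)
        (Set.Finite.bddAbove (Set.finite_range _)) i
    rw [hcount i r]
    linarith
  have hAle : A ≤ sInf S + L := by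
    have h6 : A - L ≤ sInf S := le_csInf hSne fun s hs => by linarith [hstep s hs]
    linarith
  have hnpos : (0:ℝ) < n := by exact_mod_cast Nat.lt_of_lt_of_le Nat.zero_lt_one hn
  have hmul := mul_le_mul_of_nonneg_left hAle (by positivity : (0:ℝ) ≤ 1 / n)
  have hring : (1 / (n:ℝ)) * (sInf S + L) = (1 / (n:ℝ)) * sInf S + L / n := by
    field_simp
  rw [radh, radRelax, ← hS, ← hA]
  rw [hring] at hmul
  exact hmul
end

section
/- Let c_1,...,c_L ∈ [q]^n and let x_1,...,x_L ∈ (∂Δ)^n be their images under the coordinatewise embedding φ. Then for every probability distribution ω on [L], the weighted average radius admits the explicit formula rad_ω(x_1,...,x_L) = 1 − (1/n) ∑_{j=1}^n max_{x∈[q]} ∑_{i∈[L]: c_i(j)=x} ω(i). -/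
open Finset

/-- The weighted average radius `rad_ω(x₁,…,x_L) = (1/n) inf_{y∈Δⁿ} ∑_i ω(i) d(xᵢ,y)`. -/
noncomputable def radOmega {q n L : ℕ} (ω : Fin L → ℝ) (xs : Fin L → Fin n → Fin q → ℝ) : ℝ :=
  (1 / (n : ℝ)) *
    sInf {r : ℝ | ∃ y : Fin n → Fin q → ℝ, (∀ j, IsDist (y j)) ∧ r = ∑ i, ω i * dvec (xs i) y}

/-! On a vertex `e_c` of the simplex, `d(e_c, y) = 1 - y(c)` coordinatewise, so the
objective `∑ᵢ ω(i) d(xᵢ, y)` equals `n - ∑_j ∑_x w_j(x) y_j(x)`, where `w_j(x)` (`symbolWeight`) is the total weight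
of the words with symbol `x` at position `j`. A linear functional on the simplex is maximised at a
vertex, so the infimum is attained at `y_j = e_{x_j}` with `x_j` a plurality symbol at `j`. -/

def symbolWeight {ι κ α : Type*} [Fintype ι] [DecidableEq α] (cs : ι → κ → α) (ω : ι → ℝ)
    (j : κ) (x : α) : ℝ :=
  ∑ i ∈ univ.filter (fun i => cs i j = x), ω i

lemma sum_mul_comp_eq_sum_fiber {ι α : Type*} [Fintype ι] [Fintype α] [DecidableEq α]
    (c : ι → α) (ω : ι → ℝ) (f : α → ℝ) :
    ∑ i, ω i * f (c i) = ∑ x, (∑ i ∈ univ.filter (fun i => c i = x), ω i) * f x := by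
  rw [← sum_fiberwise univ c]
  refine sum_congr rfl fun x _ => ?_
  rw [sum_mul]
  exact sum_congr rfl fun i hi => by rw [(mem_filter.1 hi).2]

lemma IsDist.apply_le_one {α : Type*} [Fintype α] {y : α → ℝ} (hy : IsDist y) (a : α) :
    y a ≤ 1 :=
  hy.2 ▸ single_le_sum (fun k _ => hy.1 k) (mem_univ a)

lemma IsDist.sum_mul_le_iSup {α : Type*} [Fintype α] {y : α → ℝ} (hy : IsDist y) (w : α → ℝ) :
    ∑ x, w x * y x ≤ ⨆ x, w x :=
  calc ∑ x, w x * y x ≤ ∑ x, (⨆ x, w x) * y x :=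
        sum_le_sum fun x _ =>
          mul_le_mul_of_nonneg_right (le_ciSup (Finite.bddAbove_range w) x) (hy.1 x)
    _ = ⨆ x, w x := by rw [← mul_sum, hy.2, mul_one]

lemma isDist_phi {q : ℕ} (a : Fin q) : IsDist (phi q a) :=
  ⟨fun k => by unfold phi; positivity, by simp [phi]⟩

lemma sum_mul_phi {q : ℕ} (w : Fin q → ℝ) (a : Fin q) : ∑ x, w x * phi q a x = w a := by
  simp [phi]

lemma abs_phi_sub {q : ℕ} {y : Fin q → ℝ} (hy : IsDist y) (c k : Fin q) :
    |phi q c k - y k| = (if k = c then 1 - 2 * y k else 0) + y k := by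
  unfold phi
  split_ifs with h
  · rw [abs_of_nonneg (by subst h; linarith [hy.apply_le_one k])]
    ring
  · rw [abs_of_nonpos (by linarith [hy.1 k])]
    ring

lemma dvec_phi {q n : ℕ} (c : Fin n → Fin q) {y : Fin n → Fin q → ℝ}
    (hy : ∀ j, IsDist (y j)) :
    dvec (fun j => phi q (c j)) y = ∑ j, (1 - y j (c j)) := by
  rw [dvec, mul_sum]
  refine sum_congr rfl fun j _ => ?_
  simp only [abs_phi_sub (hy j), sum_add_distrib, sum_ite_eq', mem_univ, if_true, (hy j).2]
  ring

lemma sum_mul_dvec_phi {q n L : ℕ} (cs : Fin L → Fin n → Fin q) {ω : Fin L → ℝ}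
    (hω : ∑ i, ω i = 1) {y : Fin n → Fin q → ℝ} (hy : ∀ j, IsDist (y j)) :
    ∑ i, ω i * dvec (fun j => phi q (cs i j)) y =
      ∑ j, (1 - ∑ x, symbolWeight cs ω j x * y j x) := by
  simp only [dvec_phi _ hy, mul_sum]
  rw [sum_comm]
  refine sum_congr rfl fun j _ => ?_
  simp only [mul_sub, mul_one, sum_sub_distrib, hω]
  rw [sum_mul_comp_eq_sum_fiber (cs · j) ω (y j)]
  rfl

lemma isLeast_sum_mul_dvec_phi {q n L : ℕ} [NeZero q] (cs : Fin L → Fin n → Fin q)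
    {ω : Fin L → ℝ} (hω : ∑ i, ω i = 1) :
    IsLeast {r : ℝ | ∃ y : Fin n → Fin q → ℝ, (∀ j, IsDist (y j)) ∧
        r = ∑ i, ω i * dvec (fun j => phi q (cs i j)) y}
      (∑ j, (1 - ⨆ x, symbolWeight cs ω j x)) := by
  constructor
  · choose x₀ hx₀ using fun j => exists_eq_ciSup_of_finite (f := symbolWeight cs ω j)
    refine ⟨fun j => phi q (x₀ j), fun j => isDist_phi _, ?_⟩
    simp only [sum_mul_dvec_phi cs hω fun j => isDist_phi _, sum_mul_phi, hx₀]
  · rintro r ⟨y, hy, rfl⟩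
    rw [sum_mul_dvec_phi cs hω hy]
    exact sum_le_sum fun j _ => sub_le_sub_left ((hy j).sum_mul_le_iSup _) 1

theorem radOmega_explicit_formula_general (q n L : ℕ) (hq : 2 ≤ q) (hn : 1 ≤ n)
    (cs : Fin L → Fin n → Fin q) (ω : Fin L → ℝ) (hω : IsDist ω) :
    radOmega ω (fun i j => phi q (cs i j)) =
      1 - (1 / (n : ℝ)) *
        ∑ j, ⨆ x : Fin q, ∑ i ∈ Finset.univ.filter (fun i => cs i j = x), ω i := by
  have : NeZero q := ⟨by omega⟩
  have hn' : (n : ℝ) ≠ 0 := Nat.cast_ne_zero.2 (by omega)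
  rw [radOmega, (isLeast_sum_mul_dvec_phi cs hω.2).csInf_eq, sum_sub_distrib]
  simp only [sum_const, card_univ, Fintype.card_fin, nsmul_eq_mul, mul_one, mul_sub,
    one_div_mul_cancel hn']
  rfl

/-- Explicit formula for the weighted average radius:
`rad_ω(x₁,…,x_L) = 1 − (1/n) ∑_j max_{x∈[q]} ∑_{i : cᵢ(j)=x} ω(i)`. -/
theorem radOmega_explicit_formula (q n L : ℕ) (hq : 2 ≤ q) (hn : 1 ≤ n) (hL : 2 ≤ L)
    (cs : Fin L → Fin n → Fin q) (ω : Fin L → ℝ) (hω : IsDist ω) :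
    radOmega ω (fun i j => phi q (cs i j)) =
      1 - (1 / (n : ℝ)) *
        ∑ j, ⨆ x : Fin q, ∑ i ∈ Finset.univ.filter (fun i => cs i j = x), ω i :=
  radOmega_explicit_formula_general q n L hq hn cs ω hω
end

section
/- Let P be a probability distribution on [q] and ω a probability distribution on [L] with ω(L−1) ≠ ω(L), and let ω̄ be obtained from ω by averaging-out the coordinates {L−1, L}. Suppose that for all (x_1,...,x_L) ∈ [q]^L we have (1/2)(max_ω(x_1,...,x_{L−1},x_L) + max_ω(x_1,...,x_L,x_{L−1})) ≥ max_{ω̄}(x_1,...,x_{L−1},x_L). Then f(P,ω̄) ≥ f(P,ω). If moreover there exists (x_1,...,x_L) ∈ [q]^L with ∏_{i=1}^L P(x_i) > 0 for which this inequality is strict, then f(P,ω̄) > f(P,ω). -/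
open Finset

/-- `max_ω(x₁,…,x_L) = max_{x∈[q]} ∑_{i : xᵢ = x} ω(i)`. -/
noncomputable def maxOmega {q L : ℕ} (ω : Fin L → ℝ) (x : Fin L → Fin q) : ℝ :=
  ⨆ a : Fin q, ∑ i ∈ Finset.univ.filter (fun i => x i = a), ω i

/-- `f(P,ω) = 1 − ∑_{x∈[q]^L} (∏ᵢ P(xᵢ)) · max_ω(x)`. -/
noncomputable def fF {q L : ℕ} (P : Fin q → ℝ) (ω : Fin L → ℝ) : ℝ :=
  1 - ∑ x : Fin L → Fin q, (∏ i, P (x i)) * maxOmega ω x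

/-- The distribution obtained from `ω` by averaging-out the coordinates in `S`. -/
noncomputable def avgOut {L : ℕ} (ω : Fin L → ℝ) (S : Finset (Fin L)) : Fin L → ℝ :=
  fun i => if i ∈ S then (∑ j ∈ S, ω j) / (S.card : ℝ) else ω i

theorem criterion_for_increase (q L : ℕ) (hq : 2 ≤ q) (hL : 2 ≤ L)
    (P : Fin q → ℝ) (hP : IsDist P) (ω : Fin L → ℝ) (hω : IsDist ω)
    (hne : ω ⟨L - 2, by omega⟩ ≠ ω ⟨L - 1, by omega⟩)
    (hcrit : ∀ x : Fin L → Fin q,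
      (1 / 2) * (maxOmega ω x +
          maxOmega ω (x ∘ Equiv.swap (⟨L - 2, by omega⟩ : Fin L) (⟨L - 1, by omega⟩ : Fin L))) ≥
        maxOmega (avgOut ω {⟨L - 2, by omega⟩, ⟨L - 1, by omega⟩}) x) :
    fF P (avgOut ω {⟨L - 2, by omega⟩, ⟨L - 1, by omega⟩}) ≥ fF P ω ∧
      ((∃ x : Fin L → Fin q, 0 < ∏ i, P (x i) ∧
          maxOmega (avgOut ω {⟨L - 2, by omega⟩, ⟨L - 1, by omega⟩}) x <
            (1 / 2) * (maxOmega ω x +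
              maxOmega ω
                (x ∘ Equiv.swap (⟨L - 2, by omega⟩ : Fin L) (⟨L - 1, by omega⟩ : Fin L)))) →
        fF P (avgOut ω {⟨L - 2, by omega⟩, ⟨L - 1, by omega⟩}) > fF P ω) := by
  set a : Fin L := ⟨L - 2, by omega⟩ with ha
  set b : Fin L := ⟨L - 1, by omega⟩ with hb
  set s : Equiv.Perm (Fin L) := Equiv.swap a b with hs
  set ωb : Fin L → ℝ := avgOut ω {a, b} with hωb
  have hPnn : ∀ x : Fin L → Fin q, 0 ≤ ∏ i, P (x i) := fun x =>
    Finset.prod_nonneg fun i _ => hP.1 (x i)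
  -- precomposition with the swap preserves the weighted sum of maxOmega ω
  have hswap : ∑ x : Fin L → Fin q, (∏ i, P (x i)) * maxOmega ω (x ∘ s)
      = ∑ x : Fin L → Fin q, (∏ i, P (x i)) * maxOmega ω x := by
    apply Fintype.sum_equiv (Equiv.arrowCongr s.symm (Equiv.refl (Fin q)))
    intro x
    have h1 : (Equiv.arrowCongr s.symm (Equiv.refl (Fin q))) x = x ∘ s := rfl
    rw [h1]
    have h2 : ∏ i, P ((x ∘ s) i) = ∏ i, P (x i) := Equiv.prod_comp s fun i => P (x i)
    rw [h2]
  -- the middle sum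
  have hmid : ∑ x : Fin L → Fin q,
      (∏ i, P (x i)) * ((1 / 2) * (maxOmega ω x + maxOmega ω (x ∘ s)))
      = ∑ x : Fin L → Fin q, (∏ i, P (x i)) * maxOmega ω x := by
    have : ∀ x : Fin L → Fin q,
        (∏ i, P (x i)) * ((1 / 2) * (maxOmega ω x + maxOmega ω (x ∘ s)))
        = (1 / 2) * ((∏ i, P (x i)) * maxOmega ω x)
          + (1 / 2) * ((∏ i, P (x i)) * maxOmega ω (x ∘ s)) := fun x => by ring
    rw [Finset.sum_congr rfl (fun x _ => this x), Finset.sum_add_distrib,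
      ← Finset.mul_sum, ← Finset.mul_sum, hswap]
    ring
  have hle : ∀ x : Fin L → Fin q, (∏ i, P (x i)) * maxOmega ωb x
      ≤ (∏ i, P (x i)) * ((1 / 2) * (maxOmega ω x + maxOmega ω (x ∘ s))) := fun x =>
    mul_le_mul_of_nonneg_left (hcrit x) (hPnn x)
  constructor
  · have hsum : ∑ x : Fin L → Fin q, (∏ i, P (x i)) * maxOmega ωb x
        ≤ ∑ x : Fin L → Fin q, (∏ i, P (x i)) * maxOmega ω x := by
      calc ∑ x : Fin L → Fin q, (∏ i, P (x i)) * maxOmega ωb x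
          ≤ ∑ x : Fin L → Fin q,
              (∏ i, P (x i)) * ((1 / 2) * (maxOmega ω x + maxOmega ω (x ∘ s))) :=
            Finset.sum_le_sum fun x _ => hle x
        _ = _ := hmid
    simp only [fF]
    linarith
  · rintro ⟨x₀, hx₀, hlt⟩
    have hsum : ∑ x : Fin L → Fin q, (∏ i, P (x i)) * maxOmega ωb x
        < ∑ x : Fin L → Fin q, (∏ i, P (x i)) * maxOmega ω x := by
      calc ∑ x : Fin L → Fin q, (∏ i, P (x i)) * maxOmega ωb x
          < ∑ x : Fin L → Fin q,
              (∏ i, P (x i)) * ((1 / 2) * (maxOmega ω x + maxOmega ω (x ∘ s))) := by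
            apply Finset.sum_lt_sum (fun x _ => hle x)
            exact ⟨x₀, Finset.mem_univ _, mul_lt_mul_of_pos_left hlt hx₀⟩
        _ = _ := hmid
    simp only [fF]
    linarith
end

section
/- For every probability distribution P on [q] and every probability distribution ω on [L], f(P,ω) ≤ f(P,U_L), where U_L is the uniform distribution on [L]. -/
open Finset

theorem fF_le_fF_uniform (q L : ℕ) (hq : 2 ≤ q) (hL : 2 ≤ L)
    (P : Fin q → ℝ) (hP : IsDist P) (ω : Fin L → ℝ) (hω : IsDist ω) :
    fF P ω ≤ fF P (fun _ : Fin L => 1 / (L : ℝ)) := by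
  classical
  have hq0 : 0 < q := by omega
  have hL0 : 0 < L := by omega
  have hLR : (0:ℝ) < L := by exact_mod_cast hL0
  haveI : NeZero q := ⟨by omega⟩
  set cnt : (Fin L → Fin q) → Fin q → ℕ :=
    fun x a => (univ.filter (fun i => x i = a)).card with hcnt
  have hex : ∀ c : Fin q → ℕ, ∃ a, ∀ b, c b ≤ c a := fun c => Finite.exists_max c
  set A : (Fin L → Fin q) → Fin q := fun x => (hex (cnt x)).choose with hAdef
  have hAspec : ∀ x b, cnt x b ≤ cnt x (A x) := fun x => (hex (cnt x)).choose_spec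
  -- any fiber sum is at most the sup
  have h1 : ∀ (w : Fin L → ℝ) (x : Fin L → Fin q) (a : Fin q),
      (∑ i ∈ univ.filter (fun i => x i = a), w i) ≤ maxOmega w x := by
    intro w x a
    rw [maxOmega]
    exact le_ciSup (f := fun a => ∑ i ∈ univ.filter (fun i => x i = a), w i)
      (Set.Finite.bddAbove (Set.finite_range _)) a
  -- fiber sums for the uniform distribution
  have hsumU : ∀ (x : Fin L → Fin q) (a : Fin q),
      (∑ i ∈ univ.filter (fun i => x i = a), (1 / (L:ℝ))) = (cnt x a : ℝ) / L := by
    intro x a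
    rw [Finset.sum_const, nsmul_eq_mul, hcnt]
    ring
  -- maxOmega of uniform is the max fiber size over L
  have h2 : ∀ x : Fin L → Fin q,
      maxOmega (fun _ : Fin L => 1 / (L:ℝ)) x = (cnt x (A x) : ℝ) / L := by
    intro x
    apply le_antisymm
    · apply ciSup_le
      intro a
      rw [hsumU]
      gcongr
      exact_mod_cast hAspec x a
    · rw [← hsumU x (A x)]
      exact h1 _ x (A x)
  -- the weight function c
  set c : Fin L → ℝ := fun i =>
    ∑ x : Fin L → Fin q, (∏ k, P (x k)) * (if x i = A x then (1:ℝ) else 0) with hc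
  have hcconst : ∀ i j : Fin L, c i = c j := by
    intro i j
    rw [hc]
    apply Fintype.sum_equiv (Equiv.arrowCongr (Equiv.swap i j) (Equiv.refl (Fin q)))
    intro x
    have hx' : (Equiv.arrowCongr (Equiv.swap i j) (Equiv.refl (Fin q))) x
        = fun k => x (Equiv.swap i j k) := by
      funext k
      simp [Equiv.arrowCongr]
    rw [hx']
    have hcnteq : cnt (fun k => x (Equiv.swap i j k)) = cnt x := by
      funext a
      exact Finset.card_equiv (Equiv.swap i j) (fun k => by simp)
    have hAeq : A (fun k => x (Equiv.swap i j k)) = A x := by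
      rw [hAdef]
      simp only [hcnteq]
    have hprod : (∏ k, P (x (Equiv.swap i j k))) = ∏ k, P (x k) :=
      Equiv.prod_comp (Equiv.swap i j) (fun k => P (x k))
    have hj : (fun k => x ((Equiv.swap i j) k)) j = x i := by simp
    rw [hprod, hAeq, hj]
  set i0 : Fin L := ⟨0, by omega⟩ with hi0
  -- the key exchange identity
  have hT : ∀ w : Fin L → ℝ,
      (∑ x : Fin L → Fin q, (∏ k, P (x k)) * ∑ i ∈ univ.filter (fun i => x i = A x), w i)
      = (∑ i : Fin L, w i) * c i0 := by
    intro w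
    have hstep : ∀ x : Fin L → Fin q,
        (∏ k, P (x k)) * ∑ i ∈ univ.filter (fun i => x i = A x), w i
        = ∑ i : Fin L, w i * ((∏ k, P (x k)) * (if x i = A x then (1:ℝ) else 0)) := by
      intro x
      rw [Finset.sum_filter, Finset.mul_sum]
      apply Finset.sum_congr rfl
      intro i _
      by_cases h : x i = A x <;> simp [h, mul_comm]
    simp_rw [hstep]
    rw [Finset.sum_comm, Finset.sum_mul]
    apply Finset.sum_congr rfl
    intro i _
    rw [← Finset.mul_sum, ← hcconst i i0, hc]
  -- compare the two sums
  have hprodnn : ∀ x : Fin L → Fin q, (0:ℝ) ≤ ∏ k, P (x k) :=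
    fun x => Finset.prod_nonneg (fun k _ => hP.1 (x k))
  have hSU : (∑ x : Fin L → Fin q, (∏ i, P (x i)) * maxOmega (fun _ : Fin L => 1 / (L:ℝ)) x)
      = c i0 := by
    have := hT (fun _ : Fin L => 1 / (L:ℝ))
    rw [Finset.sum_const, card_univ, Fintype.card_fin, nsmul_eq_mul,
      mul_one_div, div_self (ne_of_gt hLR), one_mul] at this
    rw [← this]
    apply Finset.sum_congr rfl
    intro x _
    rw [h2 x, ← hsumU x (A x)]
  have hSω : c i0 ≤ ∑ x : Fin L → Fin q, (∏ i, P (x i)) * maxOmega ω x := by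
    have := hT ω
    rw [hω.2, one_mul] at this
    rw [← this]
    apply Finset.sum_le_sum
    intro x _
    exact mul_le_mul_of_nonneg_left (h1 ω x (A x)) (hprodnn x)
  rw [fF, fF, hSU]
  linarith
end

section
/- Let P be a probability distribution on [q], ω a probability distribution on [L], and S ⊆ [L] nonempty. If ω̄ is obtained from ω by averaging-out the subset S of coordinates, then f(P,ω̄) ≥ f(P,ω). -/
open Finset

theorem fF_avgOut_ge (q L : ℕ) (hq : 2 ≤ q) (hL : 2 ≤ L)
    (P : Fin q → ℝ) (hP : IsDist P) (ω : Fin L → ℝ) (hω : IsDist ω)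
    (S : Finset (Fin L)) (hS : S.Nonempty) :
    fF P (avgOut ω S) ≥ fF P ω := by
  classical
  haveI : Nonempty (Fin q) := ⟨⟨0, by omega⟩⟩
  set n := S.card with hn
  have hn0 : 0 < n := Finset.card_pos.mpr hS
  haveI : NeZero n := ⟨hn0.ne'⟩
  have hnR : (0:ℝ) < n := by exact_mod_cast hn0
  set f : Fin n ≃ {x : Fin L // x ∈ S} := S.equivFin.symm with hf
  set π : Fin n → Equiv.Perm (Fin L) :=
    fun k => Equiv.Perm.extendDomain (Equiv.addRight k) f with hπ
  -- Lemma A : avgOut is the average of ω over the cyclic shifts π k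
  have hA : ∀ i, avgOut ω S i = (∑ k : Fin n, ω (π k i)) / n := by
    intro i
    by_cases h : i ∈ S
    · have hval : ∀ k : Fin n, π k i = (f (f.symm ⟨i, h⟩ + k) : Fin L) := by
        intro k
        simp only [hπ]
        rw [Equiv.Perm.extendDomain_apply_subtype _ f h]
        rfl
      have h1 : ∑ k : Fin n, ω (π k i) = ∑ k : Fin n, ω (f (f.symm ⟨i, h⟩ + k)) := by
        exact Finset.sum_congr rfl fun k _ => by rw [hval]
      have h2 : ∑ k : Fin n, ω (f (f.symm ⟨i, h⟩ + k)) = ∑ k : Fin n, ω (f k) :=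
        Fintype.sum_equiv (Equiv.addLeft (f.symm ⟨i, h⟩)) _ _ (fun k => rfl)
      have h3 : ∑ k : Fin n, ω (f k) = ∑ j ∈ S, ω j := by
        rw [Equiv.sum_comp f (fun j : {x : Fin L // x ∈ S} => ω ↑j)]
        exact Finset.sum_coe_sort S ω
      simp only [avgOut, h, if_true]
      rw [h1, h2, h3]
    · have hval : ∀ k : Fin n, π k i = i := by
        intro k
        simp only [hπ]
        exact Equiv.Perm.extendDomain_apply_not_subtype _ f h
      simp only [avgOut, h, if_false]
      simp only [hval]
      rw [Finset.sum_const, Finset.card_univ, Fintype.card_fin, nsmul_eq_mul]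
      field_simp
  -- Lemma B : convexity bound for maxOmega
  have hB : ∀ x : Fin L → Fin q,
      maxOmega (avgOut ω S) x ≤ (∑ k : Fin n, maxOmega ω (x ∘ (π k).symm)) / n := by
    intro x
    rw [maxOmega]
    apply ciSup_le
    intro a
    have h1 : ∑ i ∈ Finset.univ.filter (fun i => x i = a), avgOut ω S i
        = (∑ k : Fin n, ∑ i ∈ Finset.univ.filter (fun i => x i = a), ω (π k i)) / n := by
      simp only [hA]
      rw [← Finset.sum_div]
      rw [Finset.sum_comm]
    rw [h1]
    gcongr with k hk
    have h2 : ∑ i ∈ Finset.univ.filter (fun i => x i = a), ω (π k i)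
        = ∑ j ∈ Finset.univ.filter (fun j => (x ∘ (π k).symm) j = a), ω j := by
      apply Finset.sum_equiv (π k)
      · intro i
        simp
      · intro i _
        rfl
    rw [h2, maxOmega]
    exact le_ciSup (f := fun a : Fin q =>
      ∑ i ∈ Finset.univ.filter (fun i => (x ∘ (π k).symm) i = a), ω i)
      (Finite.bddAbove_range _) a
  -- Lemma C : permutation invariance of the product measure
  have hC : ∀ k : Fin n,
      ∑ x : Fin L → Fin q, (∏ i, P (x i)) * maxOmega ω (x ∘ (π k).symm)
      = ∑ x : Fin L → Fin q, (∏ i, P (x i)) * maxOmega ω x := by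
    intro k
    apply Fintype.sum_equiv (Equiv.arrowCongr (π k) (Equiv.refl (Fin q)))
    intro x
    have hcomp : (Equiv.arrowCongr (π k) (Equiv.refl (Fin q))) x = x ∘ (π k).symm := by
      funext i
      simp [Equiv.arrowCongr]
    rw [hcomp]
    congr 1
    exact (Equiv.prod_comp (π k).symm (fun i => P (x i))).symm
  -- main estimate
  have key : ∑ x : Fin L → Fin q, (∏ i, P (x i)) * maxOmega (avgOut ω S) x
      ≤ ∑ x : Fin L → Fin q, (∏ i, P (x i)) * maxOmega ω x := by
    calc ∑ x : Fin L → Fin q, (∏ i, P (x i)) * maxOmega (avgOut ω S) x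
        ≤ ∑ x : Fin L → Fin q,
            (∏ i, P (x i)) * ((∑ k : Fin n, maxOmega ω (x ∘ (π k).symm)) / n) := by
          apply Finset.sum_le_sum
          intro x _
          exact mul_le_mul_of_nonneg_left (hB x)
            (Finset.prod_nonneg fun i _ => hP.1 _)
      _ = (∑ x : Fin L → Fin q,
            ∑ k : Fin n, (∏ i, P (x i)) * maxOmega ω (x ∘ (π k).symm)) / n := by
          rw [Finset.sum_div]
          refine Finset.sum_congr rfl fun x _ => ?_
          rw [← mul_div_assoc, Finset.mul_sum]
      _ = (∑ k : Fin n, ∑ x : Fin L → Fin q,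
            (∏ i, P (x i)) * maxOmega ω (x ∘ (π k).symm)) / n := by
          rw [Finset.sum_comm]
      _ = (∑ k : Fin n, ∑ x : Fin L → Fin q,
            (∏ i, P (x i)) * maxOmega ω x) / n := by
          congr 1
          exact Finset.sum_congr rfl fun k _ => hC k
      _ = ∑ x : Fin L → Fin q, (∏ i, P (x i)) * maxOmega ω x := by
          rw [Finset.sum_const, Finset.card_univ, Fintype.card_fin, nsmul_eq_mul]
          field_simp
  unfold fF
  linarith
end

section
/- Let q ≥ 2, let A ⊆ [n] with |A| = m ≥ 1, let π_A : [q]^n → [q]^A be the coordinate projection onto A, let s ≥ 1 and ε > 0, and let C ⊆ [q]^n be a code with |C| ≥ qs satisfying min_{y∈[q]^A} max_{c∈C} d_H(π_A(c), y) ≤ m(1 − 1/q − ε). Then there exists a subcode C' ⊆ C with |C'| ≥ s such that radh(C') ≤ 1 − 1/q − (m/n)ε. -/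
/-!
Choose a centre `z` on `A` within `m (1 - 1/q - ε)` of every projected codeword. Off `A`, each
codeword takes its most frequent symbol on at least a `1/q` fraction of the `n - m` remaining
coordinates, so by pigeonhole at least `s` codewords share such a symbol `t`. Extending `z` by the
constant `t` gives a centre within `m (1 - 1/q - ε) + (n - m) (1 - 1/q) = n (1 - 1/q) - m ε` of all
of them.
-/

open Finset

/-- The Chebyshev radius of a code: `radh(C) = (1/n) min_{y∈[q]^n} max_{c∈C} d_H(c,y)`. -/
noncomputable def radhCode {q n : ℕ} (C : Finset (Fin n → Fin q)) : ℝ :=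
  (1 / (n : ℝ)) * ⨅ y : Fin n → Fin q, sSup {d : ℝ | ∃ c ∈ C, d = (hammingDist c y : ℝ)}

section MaxOverCode

variable {α : Type*} (C : Finset α) (f : α → ℝ)

theorem sSup_setOf_exists_mem_eq (hC : C.Nonempty) :
    sSup {d : ℝ | ∃ c ∈ C, d = f c} = C.sup' hC f := by
  rw [sup'_eq_csSup_image]
  congr 1
  ext d
  simp [eq_comm]

theorem le_sSup_setOf_exists_mem_eq {c : α} (hc : c ∈ C) :
    f c ≤ sSup {d : ℝ | ∃ c ∈ C, d = f c} := by
  rw [sSup_setOf_exists_mem_eq C f ⟨c, hc⟩]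
  exact le_sup' f hc

variable {Y : Type*} [Finite Y] (f : α → Y → ℝ) {R : ℝ}

theorem exists_forall_le_of_iInf_sSup_le [Nonempty Y]
    (h : ⨅ y, sSup {d : ℝ | ∃ c ∈ C, d = f c y} ≤ R) : ∃ y, ∀ c ∈ C, f c y ≤ R := by
  obtain ⟨y, hy⟩ := exists_eq_ciInf_of_finite (f := fun y => sSup {d : ℝ | ∃ c ∈ C, d = f c y})
  exact ⟨y, fun c hc => (le_sSup_setOf_exists_mem_eq C (f · y) hc).trans (hy ▸ h)⟩

theorem iInf_sSup_le_of_forall_le (hC : C.Nonempty) (y : Y) (h : ∀ c ∈ C, f c y ≤ R) :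
    ⨅ y, sSup {d : ℝ | ∃ c ∈ C, d = f c y} ≤ R := by
  refine (ciInf_le (Set.finite_range _).bddBelow y).trans ?_
  rw [sSup_setOf_exists_mem_eq C _ hC]
  exact sup'_le hC _ h

end MaxOverCode

section Hamming

variable {ι β : Type*} [DecidableEq β]

theorem hammingDist_restrict (x y : ι → β) (A : Finset ι) :
    hammingDist (fun i : A => x i) (fun i : A => y i) = #{j ∈ A | x j ≠ y j} := by
  unfold hammingDist
  rw [← card_map (Function.Embedding.subtype _)]
  congr 1
  ext j
  simp [and_comm]

variable [Fintype ι] [DecidableEq ι]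

theorem hammingDist_eq_restrict_add_compl (x y : ι → β) (A : Finset ι) :
    hammingDist x y = hammingDist (fun i : A => x i) (fun i : A => y i) + #{j ∈ Aᶜ | x j ≠ y j} := by
  rw [hammingDist_restrict, ← card_union_of_disjoint
    (disjoint_filter_filter disjoint_compl_right), ← filter_union, union_compl]
  rfl

theorem hammingDist_dite_mem (x : ι → β) (A : Finset ι) (z : A → β) (t : β) :
    hammingDist x (fun j => if h : j ∈ A then z ⟨j, h⟩ else t) =
      hammingDist (fun i : A => x i) z + #{j ∈ Aᶜ | x j ≠ t} := by
  rw [hammingDist_eq_restrict_add_compl _ _ A]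
  congr 2
  · ext i; simp
  · ext j; simp_all

end Hamming

section Majority

variable {ι β : Type*} [Fintype β] [Nonempty β] [DecidableEq β]

theorem exists_card_filter_ne_le (x : ι → β) (B : Finset ι) :
    ∃ t, (#{j ∈ B | x j ≠ t} : ℝ) ≤ #B * (1 - 1 / Fintype.card β) := by
  obtain ⟨t, -, ht⟩ := exists_le_card_fiber_of_nsmul_le_card_of_maps_to (s := B) (f := x) (t := univ)
    (b := (#B / Fintype.card β : ℝ)) (by simp) univ_nonempty (by
      rw [card_univ, nsmul_eq_mul, mul_div_cancel₀]
      exact_mod_cast Fintype.card_ne_zero)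
  refine ⟨t, ?_⟩
  have hsplit := card_filter_add_card_filter_not (s := B) (fun j => x j = t)
  rw [← Nat.cast_inj (R := ℝ), Nat.cast_add] at hsplit
  simp only [ne_eq]
  linarith [mul_one_sub (#B : ℝ) (1 / Fintype.card β), mul_one_div (#B : ℝ) (Fintype.card β)]

theorem exists_subcode_card_filter_ne_le {s : ℕ} (C : Finset (ι → β)) (B : Finset ι)
    (hC : Fintype.card β * s ≤ #C) :
    ∃ t, ∃ C' ⊆ C, s ≤ #C' ∧
      ∀ c ∈ C', (#{j ∈ B | c j ≠ t} : ℝ) ≤ #B * (1 - 1 / Fintype.card β) := by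
  choose τ hτ using fun c : ι → β => exists_card_filter_ne_le c B
  obtain ⟨t, -, ht⟩ := exists_le_card_fiber_of_mul_le_card_of_maps_to (f := τ) (t := univ)
    (by simp) univ_nonempty (by simpa using hC)
  exact ⟨t, _, filter_subset _ _, ht, fun c hc => (mem_filter.1 hc).2 ▸ hτ c⟩

end Majority

theorem projection_preserves_radius_general (q n : ℕ) (hq : 2 ≤ q)
    (A : Finset (Fin n)) (m : ℕ) (hA : A.card = m)
    (s : ℕ) (hs : 1 ≤ s) (ε : ℝ)
    (C : Finset (Fin n → Fin q)) (hCcard : q * s ≤ C.card)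
    (hproj : (⨅ y : {i // i ∈ A} → Fin q,
        sSup {d : ℝ | ∃ c ∈ C, d = (hammingDist (fun i : {i // i ∈ A} => c i.1) y : ℝ)}) ≤
      (m : ℝ) * (1 - 1 / (q : ℝ) - ε)) :
    ∃ C' ⊆ C, s ≤ C'.card ∧ radhCode C' ≤ 1 - 1 / (q : ℝ) - ((m : ℝ) / (n : ℝ)) * ε := by
  have : NeZero q := ⟨by omega⟩
  have ha : 0 ≤ 1 - 1 / (q : ℝ) := by
    rw [sub_nonneg, div_le_one (by positivity)]
    exact_mod_cast (by omega : 1 ≤ q)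
  obtain ⟨z, hz⟩ := exists_forall_le_of_iInf_sSup_le C _ hproj
  obtain ⟨t, C', hC'C, hsC', hC'⟩ :=
    exists_subcode_card_filter_ne_le C Aᶜ (by simpa using hCcard)
  have hmn : m ≤ n := by simpa [hA] using A.card_le_univ
  have hcompl : (#Aᶜ : ℝ) = n - m := by
    rw [card_compl, Fintype.card_fin, hA, Nat.cast_sub hmn]
  have hdist : ∀ c ∈ C', (hammingDist c (fun j => if h : j ∈ A then z ⟨j, h⟩ else t) : ℝ) ≤
      n * (1 - 1 / (q : ℝ)) - m * ε := by
    intro c hc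
    rw [hammingDist_dite_mem, Nat.cast_add]
    have hoff := hC' c hc
    simp only [Fintype.card_fin, hcompl] at hoff
    linarith [hz c (hC'C hc)]
  refine ⟨C', hC'C, hsC', ?_⟩
  calc radhCode C' ≤ 1 / n * (n * (1 - 1 / (q : ℝ)) - m * ε) :=
        mul_le_mul_of_nonneg_left
          (iInf_sSup_le_of_forall_le C' _ (card_pos.1 (by omega)) _ hdist) (by positivity)
    _ = n / n * (1 - 1 / (q : ℝ)) - m / n * ε := by ring
    _ ≤ 1 - 1 / (q : ℝ) - m / n * ε := by
        -- `n / n = 0` when `n = 0`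
        gcongr
        exact mul_le_of_le_one_left ha (div_self_le_one _)

theorem projection_preserves_radius (q n : ℕ) (hq : 2 ≤ q) (hn : 1 ≤ n)
    (A : Finset (Fin n)) (m : ℕ) (hA : A.card = m) (hm : 1 ≤ m)
    (s : ℕ) (hs : 1 ≤ s) (ε : ℝ) (hε : 0 < ε)
    (C : Finset (Fin n → Fin q)) (hCcard : q * s ≤ C.card)
    (hproj : (⨅ y : {i // i ∈ A} → Fin q,
        sSup {d : ℝ | ∃ c ∈ C, d = (hammingDist (fun i : {i // i ∈ A} => c i.1) y : ℝ)}) ≤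
      (m : ℝ) * (1 - 1 / (q : ℝ) - ε)) :
    ∃ C' ⊆ C, s ≤ C'.card ∧ radhCode C' ≤ 1 - 1 / (q : ℝ) - ((m : ℝ) / (n : ℝ)) * ε :=
  projection_preserves_radius_general q n hq A m hA s hs ε C hCcard hproj
end

section
/- Let q ≥ 3 and 2 ≤ ℓ ≤ q be integers. For every probability distribution P on [q] and every probability distribution ω on [L], f_ℓ(P,ω) ≤ f_ℓ(P,U_L), where U_L is the uniform distribution on [L]. -/
open Finset

/-- The collection `X` of `ℓ`-element subsets of `[q]`. -/
abbrev Subsets (q ℓ : ℕ) := {A : Finset (Fin q) // A.card = ℓ}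

/-- `max_{ω,ℓ}(x₁,…,x_L) = max_{A∈X} ∑_{i : xᵢ ∈ A} ω(i)`. -/
noncomputable def maxOmegaL {q L : ℕ} (ℓ : ℕ) (ω : Fin L → ℝ) (x : Fin L → Fin q) : ℝ :=
  ⨆ A : Subsets q ℓ, ∑ i ∈ Finset.univ.filter (fun i => x i ∈ A.1), ω i

/-- `f_ℓ(P,ω) = 1 − ∑_{x∈[q]^L} (∏ᵢ P(xᵢ)) · max_{ω,ℓ}(x)`. -/
noncomputable def fL {q L : ℕ} (ℓ : ℕ) (P : Fin q → ℝ) (ω : Fin L → ℝ) : ℝ :=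
  1 - ∑ x : Fin L → Fin q, (∏ i, P (x i)) * maxOmegaL ℓ ω x

lemma subsets_nonempty {q ℓ : ℕ} (h : ℓ ≤ q) : Nonempty (Subsets q ℓ) := by
  obtain ⟨s, -, hs⟩ := Finset.exists_subset_card_eq
    (show ℓ ≤ (Finset.univ : Finset (Fin q)).card by simpa using h)
  exact ⟨⟨s, hs⟩⟩

lemma maxOmegaL_comp {q L : ℕ} (ℓ : ℕ) (ω : Fin L → ℝ) (σ : Equiv.Perm (Fin L))
    (x : Fin L → Fin q) :
    maxOmegaL ℓ (fun i => ω (σ i)) x = maxOmegaL ℓ ω (fun i => x (σ.symm i)) := by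
  unfold maxOmegaL
  congr 1; funext A
  refine Finset.sum_equiv σ ?_ ?_
  · intro i; simp
  · intro i _; rfl

lemma S_comp {q L : ℕ} (ℓ : ℕ) (P : Fin q → ℝ) (ω : Fin L → ℝ) (σ : Equiv.Perm (Fin L)) :
    ∑ x : Fin L → Fin q, (∏ i, P (x i)) * maxOmegaL ℓ (fun i => ω (σ i)) x
      = ∑ x : Fin L → Fin q, (∏ i, P (x i)) * maxOmegaL ℓ ω x := by
  refine Fintype.sum_equiv (Equiv.arrowCongr σ (Equiv.refl (Fin q))) _ _ ?_
  intro x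
  rw [maxOmegaL_comp]
  have hE : (Equiv.arrowCongr σ (Equiv.refl (Fin q))) x = fun i => x (σ.symm i) := rfl
  rw [hE]
  congr 1
  exact (Equiv.prod_comp σ.symm (fun i => P (x i))).symm

theorem fL_le_fL_uniform (q ℓ L : ℕ) (hq : 3 ≤ q) (hl2 : 2 ≤ ℓ) (hlq : ℓ ≤ q) (hL : 2 ≤ L)
    (P : Fin q → ℝ) (hP : IsDist P) (ω : Fin L → ℝ) (hω : IsDist ω) :
    fL ℓ P ω ≤ fL ℓ P (fun _ : Fin L => 1 / (L : ℝ)) := by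
  haveI : NeZero L := ⟨by omega⟩
  haveI hne : Nonempty (Subsets q ℓ) := subsets_nonempty hlq
  have hLpos : (0:ℝ) < L := by exact_mod_cast (by omega : 0 < L)
  have hLinv : (0:ℝ) ≤ 1 / L := by positivity
  -- convexity step: pointwise bound on maxOmegaL for uniform
  have step1 : ∀ x : Fin L → Fin q,
      maxOmegaL ℓ (fun _ : Fin L => 1 / (L:ℝ)) x
        ≤ (1/(L:ℝ)) * ∑ k : Fin L, maxOmegaL ℓ (fun i => ω (i + k)) x := by
    intro x
    apply ciSup_le
    intro A
    have h1 : ∑ i ∈ Finset.univ.filter (fun i => x i ∈ A.1), (1/(L:ℝ))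
        = (1/(L:ℝ)) * ∑ k : Fin L,
            ∑ i ∈ Finset.univ.filter (fun i => x i ∈ A.1), ω (i + k) := by
      rw [Finset.sum_comm, Finset.mul_sum]
      refine Finset.sum_congr rfl fun i _ => ?_
      have : ∑ k : Fin L, ω (i + k) = 1 := by
        rw [← hω.2]
        exact Fintype.sum_equiv (Equiv.addLeft i) _ _ (fun k => rfl)
      rw [this, mul_one]
    rw [h1]
    apply mul_le_mul_of_nonneg_left _ hLinv
    apply Finset.sum_le_sum
    intro k _
    exact le_ciSup (Set.Finite.bddAbove (Set.finite_range
      (fun B : Subsets q ℓ => ∑ i ∈ Finset.univ.filter (fun i => x i ∈ B.1), ω (i + k)))) A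
  -- total bound
  have key : ∑ x : Fin L → Fin q, (∏ i, P (x i)) * maxOmegaL ℓ (fun _ : Fin L => 1/(L:ℝ)) x
      ≤ ∑ x : Fin L → Fin q, (∏ i, P (x i)) * maxOmegaL ℓ ω x := by
    calc ∑ x : Fin L → Fin q, (∏ i, P (x i)) * maxOmegaL ℓ (fun _ : Fin L => 1/(L:ℝ)) x
        ≤ ∑ x : Fin L → Fin q, (∏ i, P (x i)) *
            ((1/(L:ℝ)) * ∑ k : Fin L, maxOmegaL ℓ (fun i => ω (i + k)) x) := by
          refine Finset.sum_le_sum fun x _ => ?_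
          exact mul_le_mul_of_nonneg_left (step1 x)
            (Finset.prod_nonneg fun i _ => hP.1 (x i))
      _ = (1/(L:ℝ)) * ∑ k : Fin L,
            ∑ x : Fin L → Fin q, (∏ i, P (x i)) * maxOmegaL ℓ (fun i => ω (i + k)) x := by
          simp only [Finset.mul_sum]
          rw [Finset.sum_comm]
          exact Finset.sum_congr rfl fun k _ => Finset.sum_congr rfl fun x _ => by ring
      _ = (1/(L:ℝ)) * ∑ k : Fin L,
            ∑ x : Fin L → Fin q, (∏ i, P (x i)) * maxOmegaL ℓ ω x := by
          congr 1
          refine Finset.sum_congr rfl fun k _ => ?_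
          exact S_comp ℓ P ω (Equiv.addRight k)
      _ = ∑ x : Fin L → Fin q, (∏ i, P (x i)) * maxOmegaL ℓ ω x := by
          rw [Finset.sum_const, Finset.card_univ, Fintype.card_fin, nsmul_eq_mul]
          field_simp
  unfold fL
  linarith [key]
end

section
/- Let q > ℓ ≥ 2 and L > ℓ be integers, and let P be a probability distribution on [q] with P(x) > 0 for all x ∈ [q]. Then for a probability distribution ω on [L], f_ℓ(P,ω) = f_ℓ(P,U_L) if and only if ω = U_L. -/
open Finset

/-!
For the uniform weight the maximum over `ℓ`-sets is attained at a set `bestSet x` covering as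
many coordinates of `x` as possible, and this choice is invariant under permuting coordinates.
As the product weight `∏ P (x i)` is permutation invariant too, `∑ₓ p(x) · ω(bestSet x)` takes
the same value for every `ω` of total mass one. Hence `f_ℓ(P, ω) ≤ f_ℓ(P, U_L)`, with equality
(as `P > 0`) only if `bestSet x` attains the `ω`-maximum for every `x`. Test this on a tuple `y`
taking `ℓ + 1` values, two of them at a single coordinate each: `bestSet y` misses exactly one
coordinate `d`, while removing the value at another such coordinate `e` gives a competing
`ℓ`-set, so `ω d ≤ ω e`. Permuting coordinates moves `d` and `e` to any `i ≠ j`.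
-/

section WeightIn

variable {ι α : Type*} [Fintype ι] [DecidableEq α]

def weightIn (ω : ι → ℝ) (x : ι → α) (A : Finset α) : ℝ :=
  ∑ i ∈ univ.filter (fun i => x i ∈ A), ω i

lemma weightIn_const (c : ℝ) (x : ι → α) (A : Finset α) :
    weightIn (fun _ => c) x A = #(univ.filter fun i => x i ∈ A) * c := by
  rw [weightIn, sum_const, nsmul_eq_mul]

lemma weightIn_eq_sub_of_filter_notMem_eq {ω : ι → ℝ} {x : ι → α} {A : Finset α} {d : ι}
    (hd : univ.filter (fun i => x i ∉ A) = {d}) :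
    weightIn ω x A = ∑ i, ω i - ω d := by
  rw [weightIn, ← sum_filter_add_sum_filter_not univ (fun i => x i ∈ A), hd, sum_singleton]
  ring

variable [DecidableEq ι] [Fintype α]

lemma sum_mul_weightIn (p : (ι → α) → ℝ) (F : (ι → α) → Finset α) (ω : ι → ℝ) :
    ∑ x, p x * weightIn ω x (F x)
      = ∑ i, (∑ x ∈ univ.filter (fun x => x i ∈ F x), p x) * ω i := by
  simp only [weightIn, mul_sum, sum_filter, sum_mul]
  rw [sum_comm]
  refine sum_congr rfl fun i _ => sum_congr rfl fun x _ => ?_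
  split_ifs <;> simp

variable {p : (ι → α) → ℝ} {F : (ι → α) → Finset α}

lemma sum_filter_apply_mem_eq_of_perm_invariant (hp : ∀ (σ : Equiv.Perm ι) x, p (x ∘ σ) = p x)
    (hF : ∀ (σ : Equiv.Perm ι) x, F (x ∘ σ) = F x) (i j : ι) :
    ∑ x ∈ univ.filter (fun x => x i ∈ F x), p x = ∑ x ∈ univ.filter (fun x => x j ∈ F x), p x := by
  rw [sum_filter, sum_filter]
  refine Fintype.sum_equiv ((Equiv.swap i j).arrowCongr (Equiv.refl α)) _ _ fun x => ?_
  have he : (Equiv.swap i j).arrowCongr (Equiv.refl α) x = x ∘ Equiv.swap i j := rfl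
  simp [he, hp, hF]

lemma sum_mul_weightIn_eq_of_sum_eq (hp : ∀ (σ : Equiv.Perm ι) x, p (x ∘ σ) = p x)
    (hF : ∀ (σ : Equiv.Perm ι) x, F (x ∘ σ) = F x) {ω ω' : ι → ℝ}
    (h : ∑ i, ω i = ∑ i, ω' i) :
    ∑ x, p x * weightIn ω x (F x) = ∑ x, p x * weightIn ω' x (F x) := by
  rcases isEmpty_or_nonempty ι with hι | ⟨⟨i₀⟩⟩
  · simp [weightIn]
  have hc (ω : ι → ℝ) : ∑ x, p x * weightIn ω x (F x)
      = (∑ x ∈ univ.filter (fun x => x i₀ ∈ F x), p x) * ∑ i, ω i := by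
    rw [sum_mul_weightIn, mul_sum]
    exact sum_congr rfl fun i _ => by rw [sum_filter_apply_mem_eq_of_perm_invariant hp hF i i₀]
  rw [hc, hc, h]

end WeightIn

section BestSet

variable {ι : Type*} [Fintype ι] {q ℓ : ℕ}

lemma nonempty_subsets (h : ℓ ≤ q) : Nonempty (Subsets q ℓ) := by
  obtain ⟨A, -, hA⟩ := exists_subset_card_eq (s := (univ : Finset (Fin q))) (by simpa using h)
  exact ⟨⟨A, hA⟩⟩

noncomputable def bestSet (h : ℓ ≤ q) (x : ι → Fin q) : Subsets q ℓ :=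
  (exists_max_image univ (fun A : Subsets q ℓ => #(univ.filter fun i => x i ∈ A.1))
    (have := nonempty_subsets h; univ_nonempty)).choose

lemma card_filter_mem_le_bestSet (h : ℓ ≤ q) (x : ι → Fin q) (A : Subsets q ℓ) :
    #(univ.filter fun i => x i ∈ A.1) ≤ #(univ.filter fun i => x i ∈ (bestSet h x).1) :=
  (exists_max_image univ (fun A : Subsets q ℓ => #(univ.filter fun i => x i ∈ A.1))
    (have := nonempty_subsets h; univ_nonempty)).choose_spec.2 A (mem_univ A)

lemma bestSet_comp_perm (h : ℓ ≤ q) (σ : Equiv.Perm ι) (x : ι → Fin q) :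
    bestSet h (x ∘ σ) = bestSet h x := by
  have hcard (A : Finset (Fin q)) :
      #(univ.filter fun i => (x ∘ σ) i ∈ A) = #(univ.filter fun i => x i ∈ A) := by
    simp only [card_filter, Function.comp_apply]
    exact Equiv.sum_comp σ fun i => if x i ∈ A then 1 else 0
  simp only [bestSet, hcard]

lemma weightIn_le_maxOmegaL {L : ℕ} (ω : Fin L → ℝ) (x : Fin L → Fin q) (A : Subsets q ℓ) :
    weightIn ω x A.1 ≤ maxOmegaL ℓ ω x :=
  le_ciSup (f := fun A : Subsets q ℓ => weightIn ω x A.1) (Set.finite_range _).bddAbove A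

lemma maxOmegaL_const_eq_weightIn_bestSet {L : ℕ} (h : ℓ ≤ q) {c : ℝ} (hc : 0 ≤ c)
    (x : Fin L → Fin q) :
    maxOmegaL ℓ (fun _ => c) x = weightIn (fun _ => c) x (bestSet h x).1 := by
  have := nonempty_subsets h
  refine le_antisymm (ciSup_le fun A => ?_) (weightIn_le_maxOmegaL _ x _)
  change weightIn _ x A.1 ≤ _
  rw [weightIn_const, weightIn_const]
  exact mul_le_mul_of_nonneg_right (by exact_mod_cast card_filter_mem_le_bestSet h x A) hc

end BestSet

lemma filter_comp_symm_eq_singleton {ι : Type*} [Fintype ι] [DecidableEq ι] {r : ι → Prop}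
    [DecidablePred r] {c : ι} (hc : univ.filter r = {c}) (π : Equiv.Perm ι) :
    univ.filter (fun k => r (π.symm k)) = {π c} := by
  ext k
  have := congrArg (π.symm k ∈ ·) hc
  simp only [mem_filter, mem_univ, true_and, mem_singleton] at this ⊢
  rw [this, Equiv.symm_apply_eq]

lemma exists_perm_apply_eq_and_apply_eq {ι : Type*} [DecidableEq ι] {a b c d : ι}
    (hab : a ≠ b) (hcd : c ≠ d) : ∃ π : Equiv.Perm ι, π a = c ∧ π b = d := by
  have hc : c ≠ Equiv.swap a c b := by
    nth_rw 1 [← Equiv.swap_apply_left a c]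
    exact (Equiv.swap a c).injective.ne hab
  exact ⟨(Equiv.swap a c).trans (Equiv.swap (Equiv.swap a c b) d),
    by simp [Equiv.swap_apply_of_ne_of_ne hc hcd], by simp⟩

section TestTuple

variable {ι : Type*} [Fintype ι] {q ℓ : ℕ} {y : ι → Fin q}

def imageErase (hy : #(univ.image y) = ℓ + 1) (e : ι) : Subsets q ℓ :=
  ⟨(univ.image y).erase (y e), by rw [card_erase_of_mem (mem_image_of_mem y (mem_univ e)), hy]; rfl⟩

lemma filter_notMem_imageErase (hy : #(univ.image y) = ℓ + 1) {e : ι}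
    (he : ∀ k, y k = y e → k = e) :
    univ.filter (fun k => y k ∉ (imageErase hy e).1) = {e} := by
  ext k
  simp only [imageErase, mem_filter, mem_univ, true_and, mem_erase, mem_image, not_and,
    mem_singleton]
  exact ⟨fun hk => by_contra fun hne => hk (fun hyk => hne (he k hyk)) ⟨k, rfl⟩,
    fun hk hne => absurd (congrArg y hk) hne⟩

lemma exists_filter_notMem_bestSet_eq_singleton (h : ℓ ≤ q) (hy : #(univ.image y) = ℓ + 1)
    {e : ι} (he : ∀ k, y k = y e → k = e) :
    ∃ d, univ.filter (fun k => y k ∉ (bestSet h y).1) = {d} := by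
  rw [← card_eq_one]
  have hmiss : (univ.filter fun k => y k ∉ (bestSet h y).1).Nonempty := by
    by_contra hempty
    rw [not_nonempty_iff_eq_empty, filter_eq_empty_iff] at hempty
    have hsub : univ.image y ⊆ (bestSet h y).1 := by simpa [image_subset_iff] using hempty
    have := card_le_card hsub
    rw [hy, (bestSet h y).2] at this
    omega
  -- `imageErase hy e` already covers every coordinate but `e`, and `bestSet` covers as many.
  have hbest := card_filter_mem_le_bestSet h y (imageErase hy e)
  have hsplitE := card_filter_add_card_filter_not (s := univ) fun k => y k ∈ (imageErase hy e).1
  have hsplitB := card_filter_add_card_filter_not (s := univ) fun k => y k ∈ (bestSet h y).1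
  rw [filter_notMem_imageErase hy he, card_singleton] at hsplitE
  have := hmiss.card_pos
  omega

end TestTuple

lemma natCast_ne_zero_of_sum_eq_one {L : ℕ} {ω : Fin L → ℝ} (hω : ∑ i, ω i = 1) :
    (L : ℝ) ≠ 0 := by
  rintro hL
  obtain rfl : L = 0 := by exact_mod_cast hL
  simp at hω

lemma eq_uniform_of_forall_le {L : ℕ} {ω : Fin L → ℝ} (hω : ∑ i, ω i = 1)
    (hle : ∀ i j, ω i ≤ ω j) : ω = fun _ => 1 / (L : ℝ) := by
  funext k
  have hconst : ∑ i, ω i = L * ω k := by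
    rw [sum_congr rfl fun i _ => le_antisymm (hle i k) (hle k i), sum_const, card_univ,
      Fintype.card_fin, nsmul_eq_mul]
  rw [eq_div_iff (natCast_ne_zero_of_sum_eq_one hω), mul_comm, ← hconst, hω]

section Rigidity

variable {q ℓ L : ℕ}

lemma maxOmegaL_eq_weightIn_bestSet_of_fL_eq (h : ℓ ≤ q) {P : Fin q → ℝ}
    (hP : ∀ v, 0 < P v) {ω : Fin L → ℝ} (hω : ∑ i, ω i = 1)
    (hf : fL ℓ P ω = fL ℓ P (fun _ : Fin L => 1 / (L : ℝ))) (x : Fin L → Fin q) :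
    maxOmegaL ℓ ω x = weightIn ω x (bestSet h x).1 := by
  have hp (σ : Equiv.Perm (Fin L)) (x : Fin L → Fin q) :
      ∏ i, P ((x ∘ σ) i) = ∏ i, P (x i) :=
    Equiv.prod_comp σ fun i => P (x i)
  have hpos (x : Fin L → Fin q) : 0 < ∏ i, P (x i) := prod_pos fun i _ => hP (x i)
  have hsum : ∑ x : Fin L → Fin q, (∏ i, P (x i)) * weightIn ω x (bestSet h x).1
      = ∑ x : Fin L → Fin q, (∏ i, P (x i)) * maxOmegaL ℓ ω x :=
    calc _ = ∑ x : Fin L → Fin q,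
            (∏ i, P (x i)) * weightIn (fun _ => 1 / (L : ℝ)) x (bestSet h x).1 :=
          sum_mul_weightIn_eq_of_sum_eq hp (fun σ x => congrArg Subtype.val
            (bestSet_comp_perm h σ x)) (by simp [hω, natCast_ne_zero_of_sum_eq_one hω])
      _ = ∑ x : Fin L → Fin q, (∏ i, P (x i)) * maxOmegaL ℓ (fun _ => 1 / (L : ℝ)) x := by
          simp only [maxOmegaL_const_eq_weightIn_bestSet h (by positivity : (0 : ℝ) ≤ 1 / L)]
      _ = _ := by
          unfold fL at hf
          linarith
  have hterm := (sum_eq_sum_iff_of_le fun x _ => mul_le_mul_of_nonneg_left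
    (weightIn_le_maxOmegaL ω x (bestSet h x)) (hpos x).le).1 hsum x (mem_univ x)
  exact (mul_left_cancel₀ (hpos x).ne' hterm).symm

lemma le_of_forall_maxOmegaL_eq_weightIn_bestSet (h : ℓ ≤ q) {ω : Fin L → ℝ}
    (H : ∀ x, maxOmegaL ℓ ω x = weightIn ω x (bestSet h x).1) {y : Fin L → Fin q}
    (hy : #(univ.image y) = ℓ + 1) {e₁ e₂ : Fin L} (h₁₂ : e₁ ≠ e₂)
    (he₁ : ∀ k, y k = y e₁ → k = e₁) (he₂ : ∀ k, y k = y e₂ → k = e₂) {i j : Fin L}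
    (hij : i ≠ j) : ω i ≤ ω j := by
  obtain ⟨d, hd⟩ := exists_filter_notMem_bestSet_eq_singleton h hy he₁
  obtain ⟨e, hed, he⟩ : ∃ e, e ≠ d ∧ ∀ k, y k = y e → k = e := by
    by_cases h₁ : e₁ = d
    · exact ⟨e₂, fun h₂ => h₁₂ (h₁.trans h₂.symm), he₂⟩
    · exact ⟨e₁, h₁, he₁⟩
  obtain ⟨π, hπd, hπe⟩ := exists_perm_apply_eq_and_apply_eq hed.symm hij
  have hbest := weightIn_eq_sub_of_filter_notMem_eq (ω := ω) (x := y ∘ π.symm)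
    (filter_comp_symm_eq_singleton hd π)
  have herase := weightIn_eq_sub_of_filter_notMem_eq (ω := ω) (x := y ∘ π.symm)
    (filter_comp_symm_eq_singleton (filter_notMem_imageErase hy he) π)
  rw [← bestSet_comp_perm h π.symm] at hbest
  have hle := weightIn_le_maxOmegaL ω (y ∘ π.symm) (imageErase hy e)
  rw [H, hbest, herase, hπd, hπe] at hle
  linarith

lemma exists_card_image_eq_succ_with_two_singleton_fibers (hℓ : 2 ≤ ℓ) (hℓq : ℓ < q)
    (hℓL : ℓ < L) :
    ∃ y : Fin L → Fin q, #(univ.image y) = ℓ + 1 ∧ ∃ e₁ e₂, e₁ ≠ e₂ ∧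
      (∀ k, y k = y e₁ → k = e₁) ∧ (∀ k, y k = y e₂ → k = e₂) := by
  refine ⟨fun k => ⟨min k ℓ, by omega⟩, ?_, ⟨0, by omega⟩, ⟨1, by omega⟩, by simp, ?_, ?_⟩
  · have himage :
        univ.image (fun k : Fin L => (⟨min k ℓ, by omega⟩ : Fin q)) = Iic ⟨ℓ, hℓq⟩ := by
      ext v
      simp only [mem_image, mem_univ, true_and, mem_Iic, Fin.le_def, Fin.ext_iff]
      exact ⟨fun ⟨k, hk⟩ => by omega, fun hv => ⟨⟨v, by omega⟩, by simp [hv]⟩⟩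
    rw [himage, Fin.card_Iic]
  all_goals intro k hk; simp only [Fin.ext_iff] at hk ⊢; omega

end Rigidity

theorem fL_eq_uniform_iff_general (q ℓ L : ℕ) (hl2 : 2 ≤ ℓ) (hlq : ℓ < q) (hLl : ℓ < L)
    (P : Fin q → ℝ) (hPpos : ∀ x : Fin q, 0 < P x)
    (ω : Fin L → ℝ) (hω : IsDist ω) :
    fL ℓ P ω = fL ℓ P (fun _ : Fin L => 1 / (L : ℝ)) ↔ ω = fun _ : Fin L => 1 / (L : ℝ) := by
  refine ⟨fun hf => ?_, fun h => h ▸ rfl⟩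
  have H := maxOmegaL_eq_weightIn_bestSet_of_fL_eq hlq.le hPpos hω.2 hf
  obtain ⟨y, hy, e₁, e₂, h₁₂, he₁, he₂⟩ :=
    exists_card_image_eq_succ_with_two_singleton_fibers hl2 hlq hLl
  refine eq_uniform_of_forall_le hω.2 fun i j => ?_
  rcases eq_or_ne i j with rfl | hij
  · rfl
  · exact le_of_forall_maxOmegaL_eq_weightIn_bestSet hlq.le H hy h₁₂ he₁ he₂ hij

theorem fL_eq_uniform_iff (q ℓ L : ℕ) (hl2 : 2 ≤ ℓ) (hlq : ℓ < q) (hLl : ℓ < L)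
    (P : Fin q → ℝ) (hP : IsDist P) (hPpos : ∀ x : Fin q, 0 < P x)
    (ω : Fin L → ℝ) (hω : IsDist ω) :
    fL ℓ P ω = fL ℓ P (fun _ : Fin L => 1 / (L : ℝ)) ↔ ω = fun _ : Fin L => 1 / (L : ℝ) :=
  fL_eq_uniform_iff_general q ℓ L hl2 hlq hLl P hPpos ω hω
end
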